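/- arXiv:1412.6859 — 3 statements merged into one kernel-verified Lean document; each statement's English description precedes it below -/
import Mathlib

section
/- Let U ⊆ A^{ℤ²} be an additive shift space that is horizontally block gluing, and let Ω = {Ω(n)}_{n≥1} be an expanding system of finite subsets of ℤ² that is horizontally decomposable. If limsup_{n→∞} |∂Ω(n)|/|Ω(n)| = 0, then h_Ω(U) = h_r(U). (The same conclusion holds with 'horizontally' replaced by 'vertically' in both hypotheses.) -/
open Filter
open scoped Classical

/-- The `m × n` rectangular lattice `Z_{m×n}(p)` with bottom-left corner `p`. -/
def Zrect (m n : ℕ) (p : ℤ × ℤ) : Finset (ℤ × ℤ) :=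
  (Finset.range m ×ˢ Finset.range n).image (fun ab => (p.1 + (ab.1 : ℤ), p.2 + (ab.2 : ℤ)))

/-- The number of patterns of `U` seen on the finite window `L`. -/
noncomputable def patternCount {A : Type*} (U : Set ((ℤ × ℤ) → A)) (L : Finset (ℤ × ℤ)) : ℕ :=
  Set.ncard ((fun x => fun p : L => x (p : ℤ × ℤ)) '' U)

/-- An additive shift space: nonempty, closed, translation invariant. -/
def IsShiftSpace {A : Type*} [TopologicalSpace A] (U : Set ((ℤ × ℤ) → A)) : Prop :=
  U.Nonempty ∧ IsClosed U ∧ ∀ v : ℤ × ℤ, ∀ x ∈ U, (fun p => x (p + v)) ∈ U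

/-- An expanding system of finite sublattices of `ℤ²`. -/
def IsExpandingSystem (Ω : ℕ → Finset (ℤ × ℤ)) : Prop :=
  (∀ n, Ω n ⊂ Ω (n + 1)) ∧ ∀ p : ℤ × ℤ, ∃ n, p ∈ Ω n

/-- The interior of a finite lattice. -/
def latInterior (L : Finset (ℤ × ℤ)) : Finset (ℤ × ℤ) :=
  L.filter (fun p => (p.1 + 1, p.2) ∈ L ∧ (p.1, p.2 + 1) ∈ L ∧ (p.1 + 1, p.2 + 1) ∈ L)

/-- The boundary of a finite lattice. -/
def latBoundary (L : Finset (ℤ × ℤ)) : Finset (ℤ × ℤ) := L \ latInterior L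

/-- The rectangular entropy `h_r(U)`. -/
noncomputable def rectEntropy {A : Type*} (U : Set ((ℤ × ℤ) → A)) : ℝ :=
  ⨅ mn : ℕ × ℕ, (1 / (((mn.1 + 1) * (mn.2 + 1) : ℕ) : ℝ)) *
    Real.log (patternCount U (Zrect (mn.1 + 1) (mn.2 + 1) (0, 0)))

/-- The entropy `h_Ω(U)` along an expanding system `Ω`. -/
noncomputable def entropyAlong {A : Type*} (U : Set ((ℤ × ℤ) → A)) (Ω : ℕ → Finset (ℤ × ℤ)) : ℝ :=
  Filter.limsup (fun n => (1 / ((Ω n).card : ℝ)) * Real.log (patternCount U (Ω n))) Filter.atTop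

/-- `Ω_{k,l}(n)`: the union of grid rectangles `Z_{k×l}((ak,bl))` contained in `L`. -/
noncomputable def gridPart (k l : ℕ) (L : Finset (ℤ × ℤ)) : Finset (ℤ × ℤ) :=
  L.filter (fun p => ∃ a b : ℤ,
    p ∈ Zrect k l ((k : ℤ) * a, (l : ℤ) * b) ∧ Zrect k l ((k : ℤ) * a, (l : ℤ) * b) ⊆ L)

/-- `β_{k,l}` : the size of the complement of the grid part. -/
noncomputable def betaKL (k l : ℕ) (L : Finset (ℤ × ℤ)) : ℕ := (L \ gridPart k l L).card

/-- `α_{k,l}` : the number of grid rectangles contained in `L`. -/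
noncomputable def alphaKL (k l : ℕ) (L : Finset (ℤ × ℤ)) : ℕ :=
  Set.ncard {ab : ℤ × ℤ | Zrect k l ((k : ℤ) * ab.1, (l : ℤ) * ab.2) ⊆ L}

/-- A tessellation of `ℤ²`. -/
def IsTessellation (T : Finset (ℤ × ℤ)) : Prop :=
  ∃ v : ℕ → ℤ × ℤ,
    (∀ i j : ℕ, i ≠ j → Disjoint (T.image (· + v i)) (T.image (· + v j))) ∧
    ∀ p : ℤ × ℤ, ∃ i : ℕ, p ∈ T.image (· + v i)

/-- Euclidean distance between points of `ℤ²`. -/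
noncomputable def euclDist (p q : ℤ × ℤ) : ℝ :=
  Real.sqrt (((p.1 - q.1 : ℤ) : ℝ) ^ 2 + ((p.2 - q.2 : ℤ) : ℝ) ^ 2)

/-- Block gluing with gap `M`. -/
def BlockGluingWithGap {A : Type*} (U : Set ((ℤ × ℤ) → A)) (M : ℕ) : Prop :=
  ∀ (m₁ n₁ m₂ n₂ : ℕ) (c₁ c₂ : ℤ × ℤ),
    (∀ p ∈ Zrect m₁ n₁ c₁, ∀ q ∈ Zrect m₂ n₂ c₂, (M : ℝ) ≤ euclDist p q) →
    ∀ x₁ ∈ U, ∀ x₂ ∈ U, ∃ x ∈ U,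
      (∀ p ∈ Zrect m₁ n₁ c₁, x p = x₁ p) ∧ ∀ q ∈ Zrect m₂ n₂ c₂, x q = x₂ q

/-- Block gluing. -/
def IsBlockGluing {A : Type*} (U : Set ((ℤ × ℤ) → A)) : Prop :=
  ∃ M : ℕ, 1 ≤ M ∧ BlockGluingWithGap U M

/-- A full shift on a sub-alphabet. -/
def IsFullShift {A : Type*} (U : Set ((ℤ × ℤ) → A)) : Prop :=
  ∃ B : Set A, U = {x | ∀ p : ℤ × ℤ, x p ∈ B}

/-- Shift of finite type. -/
def IsSFT {A : Type*} (U : Set ((ℤ × ℤ) → A)) : Prop :=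
  ∃ (F : Finset (ℤ × ℤ)) (P : Set (F → A)),
    U = {x | ∀ v : ℤ × ℤ, (fun p : F => x (v + (p : ℤ × ℤ))) ∈ P}

/-- `(i,j)` has horizontal length `m` in `L`. -/
def HasHorizLength (L : Finset (ℤ × ℤ)) (p : ℤ × ℤ) (m : ℕ) : Prop :=
  1 ≤ m ∧ (∃ c : ℤ × ℤ, p ∈ Zrect m 1 c ∧ Zrect m 1 c ⊆ L) ∧
    ∀ m' : ℕ, m < m' → ¬ ∃ c : ℤ × ℤ, p ∈ Zrect m' 1 c ∧ Zrect m' 1 c ⊆ L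

/-- `(i,j)` has vertical length `m` in `L`. -/
def HasVertLength (L : Finset (ℤ × ℤ)) (p : ℤ × ℤ) (m : ℕ) : Prop :=
  1 ≤ m ∧ (∃ c : ℤ × ℤ, p ∈ Zrect 1 m c ∧ Zrect 1 m c ⊆ L) ∧
    ∀ m' : ℕ, m < m' → ¬ ∃ c : ℤ × ℤ, p ∈ Zrect 1 m' c ∧ Zrect 1 m' c ⊆ L

noncomputable def betaHoriz (m : ℕ) (L : Finset (ℤ × ℤ)) : ℕ :=
  (L.filter (fun p => HasHorizLength L p m)).card

noncomputable def betaVert (m : ℕ) (L : Finset (ℤ × ℤ)) : ℕ :=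
  (L.filter (fun p => HasVertLength L p m)).card

/-- The one-dimensional sublattice segment `{s • v : 0 ≤ s ≤ n-1}`. -/
def lineSegment (v : ℤ × ℤ) (n : ℕ) : Finset (ℤ × ℤ) :=
  (Finset.range n).image (fun s : ℕ => ((s : ℤ) * v.1, (s : ℤ) * v.2))

/-- The projectional entropy along the one-dimensional sublattice generated by `v`. -/
noncomputable def projEntropy {A : Type*} (U : Set ((ℤ × ℤ) → A)) (v : ℤ × ℤ) : ℝ :=
  ⨅ n : ℕ, (1 / (n + 1 : ℝ)) * Real.log (patternCount U (lineSegment v (n + 1)))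

/-- `ĥ⁽¹⁾(U)`: supremum of projectional entropies over one-dimensional sublattices. -/
noncomputable def hHatOne {A : Type*} (U : Set ((ℤ × ℤ) → A)) : ℝ :=
  ⨆ v : {w : ℤ × ℤ // w ≠ 0}, projEntropy U (v : ℤ × ℤ)

/-- The horizontal golden-mean shift. -/
def goldenMeanShift : Set ((ℤ × ℤ) → Fin 2) :=
  {x | ∀ p : ℤ × ℤ, x p * x (p.1 + 1, p.2) = 0}

/-- The sequence `a_k`: `a_1 = 2`, `a_2 = 3`, `a_k = a_{k-1} + a_{k-2}`. -/
def aSeq : ℕ → ℕ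
  | 0 => 1
  | 1 => 2
  | (k + 2) => aSeq (k + 1) + aSeq k


/-- Horizontally block gluing: gluing of rectangles with the same bottom `j`-coordinate. -/
def HorizBlockGluingWithGap {A : Type*} (U : Set ((ℤ × ℤ) → A)) (M : ℕ) : Prop :=
  ∀ (m₁ n₁ m₂ n₂ : ℕ) (i₁ i₂ j : ℤ),
    (∀ p ∈ Zrect m₁ n₁ (i₁, j), ∀ q ∈ Zrect m₂ n₂ (i₂, j), (M : ℝ) ≤ euclDist p q) →
    ∀ x₁ ∈ U, ∀ x₂ ∈ U, ∃ x ∈ U,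
      (∀ p ∈ Zrect m₁ n₁ (i₁, j), x p = x₁ p) ∧ ∀ q ∈ Zrect m₂ n₂ (i₂, j), x q = x₂ q

/-- Vertically block gluing: gluing of rectangles with the same left `i`-coordinate. -/
def VertBlockGluingWithGap {A : Type*} (U : Set ((ℤ × ℤ) → A)) (M : ℕ) : Prop :=
  ∀ (m₁ n₁ m₂ n₂ : ℕ) (i j₁ j₂ : ℤ),
    (∀ p ∈ Zrect m₁ n₁ (i, j₁), ∀ q ∈ Zrect m₂ n₂ (i, j₂), (M : ℝ) ≤ euclDist p q) →
    ∀ x₁ ∈ U, ∀ x₂ ∈ U, ∃ x ∈ U,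
      (∀ p ∈ Zrect m₁ n₁ (i, j₁), x p = x₁ p) ∧ ∀ q ∈ Zrect m₂ n₂ (i, j₂), x q = x₂ q

/-- `Ω` is horizontally decomposable: each `Ω(n)` splits, by cutting along horizontal
lines, into at most `m` pairwise disjoint rectangular lattices. -/
def HorizDecomposable (Ω : ℕ → Finset (ℤ × ℤ)) : Prop :=
  ∃ m : ℕ, 1 ≤ m ∧ ∀ n : ℕ, ∃ k : ℕ, 1 ≤ k ∧ k ≤ m ∧ ∃ J : Fin k → ℤ × ℤ,
    (∀ i : Fin k, ∃ (mi ni : ℕ) (c : ℤ × ℤ),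
        (Ω n).filter (fun p => (J i).1 ≤ p.2 ∧ p.2 ≤ (J i).2) = Zrect mi ni c) ∧
    (∀ i i' : Fin k, i ≠ i' →
        Disjoint ((Ω n).filter (fun p => (J i).1 ≤ p.2 ∧ p.2 ≤ (J i).2))
          ((Ω n).filter (fun p => (J i').1 ≤ p.2 ∧ p.2 ≤ (J i').2))) ∧
    ∀ p ∈ Ω n, ∃ i : Fin k, (J i).1 ≤ p.2 ∧ p.2 ≤ (J i).2

/-- `Ω` is vertically decomposable: each `Ω(n)` splits, by cutting along vertical
lines, into at most `m` pairwise disjoint rectangular lattices. -/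
def VertDecomposable (Ω : ℕ → Finset (ℤ × ℤ)) : Prop :=
  ∃ m : ℕ, 1 ≤ m ∧ ∀ n : ℕ, ∃ k : ℕ, 1 ≤ k ∧ k ≤ m ∧ ∃ J : Fin k → ℤ × ℤ,
    (∀ i : Fin k, ∃ (mi ni : ℕ) (c : ℤ × ℤ),
        (Ω n).filter (fun p => (J i).1 ≤ p.1 ∧ p.1 ≤ (J i).2) = Zrect mi ni c) ∧
    (∀ i i' : Fin k, i ≠ i' →
        Disjoint ((Ω n).filter (fun p => (J i).1 ≤ p.1 ∧ p.1 ≤ (J i).2))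
          ((Ω n).filter (fun p => (J i').1 ≤ p.1 ∧ p.1 ≤ (J i').2))) ∧
    ∀ p ∈ Ω n, ∃ i : Fin k, (J i).1 ≤ p.1 ∧ p.1 ≤ (J i).2


/-!
Upper bound: cover a window `L` by the `k × l` grid blocks meeting it. At most `|L| / (k l)` of
them lie inside `L`, and each of the others contains a point of `L` with a neighbour outside `L`;
there are at most `4 |∂L|` such points. Hence
`log Γ(L) ≤ (|L| / (k l) + 4 |∂L|) log Γ_{k×l}`, and the boundary term vanishes along `Ω`.

Lower bound: the translates `L + v`, `v ∈ Q - L`, cover every point of a square `Q` at least `|L|`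
times, so Shearer's inequality gives `|L| log Γ(Q) ≤ |Q - L| log Γ(L)`; letting `Q` grow yields
`h_r(U) |L| ≤ log Γ(L)` for every finite `L`. Shearer's inequality follows from the monotonicity
and submodularity of the entropy of the uniform distribution on the patterns of `Q`.
-/

open Finset Topology

def IsTranslationInvariant {A : Type*} (U : Set ((ℤ × ℤ) → A)) : Prop :=
  ∀ v : ℤ × ℤ, ∀ x ∈ U, (fun p => x (p + v)) ∈ U

theorem Set.ncard_image_le_of_factorsThrough {α β γ : Type*} {U : Set α} {F : α → β}
    {G : α → γ} (hGF : G.FactorsThrough F) (hF : (F '' U).Finite) :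
    (G '' U).ncard ≤ (F '' U).ncard := by
  rcases U.eq_empty_or_nonempty with rfl | ⟨x₀, -⟩
  · simp
  calc (G '' U).ncard = (Function.extend F G (fun _ => G x₀) '' (F '' U)).ncard := by
        simp only [Set.image_image, hGF.extend_apply]
    _ ≤ (F '' U).ncard := Set.ncard_image_le hF

lemma Real.log_natCast_le_log_natCast {m n : ℕ} (h : m ≤ n) : Real.log m ≤ Real.log n := by
  rcases m.eq_zero_or_pos with rfl | hm
  · simpa using Real.log_natCast_nonneg n
  exact Real.log_le_log (Nat.cast_pos.mpr hm) (Nat.cast_le.mpr h)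

lemma patternCount_eq_ncard {A : Type*} (U : Set ((ℤ × ℤ) → A)) (L : Finset (ℤ × ℤ)) :
    patternCount U L = (L.restrict '' U).ncard :=
  rfl

section PatternCount
variable {A : Type*} [Fintype A] {U : Set ((ℤ × ℤ) → A)}

lemma patternCount_le_card_pow (L : Finset (ℤ × ℤ)) :
    patternCount U L ≤ Fintype.card A ^ #L := by
  calc patternCount U L ≤ Nat.card (L → A) := Set.ncard_le_card _
    _ = Fintype.card A ^ #L := by simp

lemma patternCount_mono {L L' : Finset (ℤ × ℤ)} (h : L' ⊆ L) :
    patternCount U L' ≤ patternCount U L := by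
  rw [patternCount_eq_ncard, patternCount_eq_ncard]
  exact Set.ncard_image_le_of_factorsThrough
    (fun _ _ hxy => congrArg (Finset.restrict₂ (π := fun _ => A) h) hxy) (Set.toFinite _)

lemma patternCount_union_le (L₁ L₂ : Finset (ℤ × ℤ)) :
    patternCount U (L₁ ∪ L₂) ≤ patternCount U L₁ * patternCount U L₂ := by
  have hfactor : (L₁ ∪ L₂).restrict.FactorsThrough
      (fun x : (ℤ × ℤ) → A => (L₁.restrict x, L₂.restrict x)) := by
    intro x y hxy
    simp only [Prod.mk.injEq, Finset.restrict_def, funext_iff, Subtype.forall] at hxy ⊢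
    intro p hp
    rcases Finset.mem_union.mp hp with hp | hp
    exacts [hxy.1 p hp, hxy.2 p hp]
  have hsub : (fun x : (ℤ × ℤ) → A => (L₁.restrict x, L₂.restrict x)) '' U ⊆
      (L₁.restrict '' U) ×ˢ (L₂.restrict '' U) := by
    rintro _ ⟨x, hx, rfl⟩
    exact ⟨⟨x, hx, rfl⟩, ⟨x, hx, rfl⟩⟩
  rw [patternCount_eq_ncard, patternCount_eq_ncard, patternCount_eq_ncard]
  calc ((L₁ ∪ L₂).restrict '' U).ncard
      ≤ ((fun x : (ℤ × ℤ) → A => (L₁.restrict x, L₂.restrict x)) '' U).ncard :=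
        Set.ncard_image_le_of_factorsThrough hfactor ((Set.toFinite _).subset hsub)
    _ ≤ ((L₁.restrict '' U) ×ˢ (L₂.restrict '' U)).ncard :=
        Set.ncard_le_ncard hsub (Set.toFinite _)
    _ = (L₁.restrict '' U).ncard * (L₂.restrict '' U).ncard := Set.ncard_prod

lemma patternCount_biUnion_le {κ : Type*} (K : Finset κ) (L : κ → Finset (ℤ × ℤ)) :
    patternCount U (K.biUnion L) ≤ ∏ k ∈ K, patternCount U (L k) := by
  induction K using Finset.induction_on with
  | empty =>
    rw [Finset.biUnion_empty, patternCount_eq_ncard]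
    exact Set.ncard_le_one_of_subsingleton _
  | insert k K hk ih =>
    rw [Finset.biUnion_insert, Finset.prod_insert hk]
    exact (patternCount_union_le _ _).trans (Nat.mul_le_mul_left _ ih)

lemma patternCount_image_add_le (hshift : IsTranslationInvariant U)
    (L : Finset (ℤ × ℤ)) (v : ℤ × ℤ) :
    patternCount U (L.image (· + v)) ≤ patternCount U L := by
  have hfactor : (L.image (· + v)).restrict.FactorsThrough
      (fun x : (ℤ × ℤ) → A => L.restrict (fun p => x (p + v))) := by
    intro x y hxy
    simp only [Finset.restrict_def, funext_iff, Subtype.forall, Finset.mem_image] at hxy ⊢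
    rintro _ ⟨p, hp, rfl⟩
    exact hxy p hp
  have hsub : (fun x : (ℤ × ℤ) → A => L.restrict (fun p => x (p + v))) '' U ⊆
      L.restrict '' U := by
    rintro _ ⟨x, hx, rfl⟩
    exact ⟨_, hshift v x hx, rfl⟩
  rw [patternCount_eq_ncard, patternCount_eq_ncard]
  exact (Set.ncard_image_le_of_factorsThrough hfactor ((Set.toFinite _).subset hsub)).trans
    (Set.ncard_le_ncard hsub (Set.toFinite _))

end PatternCount

section PartitionEntropy
variable {α γ γ' δ : Type*}

noncomputable def fiberCard (S : Finset α) (π : α → γ) (f : α) : ℕ :=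
  #{g ∈ S | π g = π f}

/-- `#S` times the Shannon entropy of `π X`, for `X` uniformly distributed on `S`. -/
noncomputable def partitionEntropy (S : Finset α) (π : α → γ) : ℝ :=
  ∑ f ∈ S, Real.log (#S / fiberCard S π f)

variable {S : Finset α}

lemma fiberCard_pos {π : α → γ} {f : α} (hf : f ∈ S) : 0 < fiberCard S π f :=
  Finset.card_pos.mpr ⟨f, Finset.mem_filter.mpr ⟨hf, rfl⟩⟩

lemma fiberCard_congr {π : α → γ} {f g : α} (h : π f = π g) :
    fiberCard S π f = fiberCard S π g := by
  simp only [fiberCard, h]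

lemma sum_one_div_le_one {T : Finset α} {c : α → ℕ} (h : ∀ f ∈ T, #T ≤ c f) :
    ∑ f ∈ T, (1 : ℝ) / c f ≤ 1 := by
  rcases T.eq_empty_or_nonempty with rfl | hT
  · simp
  have hT : (0 : ℝ) < #T := by exact_mod_cast hT.card_pos
  calc ∑ f ∈ T, (1 : ℝ) / c f ≤ ∑ _f ∈ T, (1 : ℝ) / #T :=
        Finset.sum_le_sum fun f hf => one_div_le_one_div_of_le hT (by exact_mod_cast h f hf)
    _ = 1 := by rw [Finset.sum_const, nsmul_eq_mul]; field_simp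

lemma partitionEntropy_eq_zero [Subsingleton γ] (π : α → γ) : partitionEntropy S π = 0 := by
  refine Finset.sum_eq_zero fun f hf => ?_
  rw [fiberCard, Finset.filter_true_of_mem fun g _ => Subsingleton.elim _ _,
    div_self (Nat.cast_ne_zero.mpr (Finset.card_ne_zero_of_mem hf)), Real.log_one]

lemma partitionEntropy_of_injOn {π : α → γ} (h : Set.InjOn π S) :
    partitionEntropy S π = #S * Real.log #S := by
  have hfiber : ∀ f ∈ S, fiberCard S π f = 1 := fun f hf => by
    rw [fiberCard, Finset.card_eq_one]
    refine ⟨f, Finset.ext fun g => ?_⟩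
    simp only [Finset.mem_filter, Finset.mem_singleton]
    exact ⟨fun hg => h hg.1 hf hg.2, by rintro rfl; exact ⟨hf, rfl⟩⟩
  rw [partitionEntropy, Finset.sum_congr rfl fun f hf => by rw [hfiber f hf], Finset.sum_const,
    nsmul_eq_mul, Nat.cast_one, div_one]

lemma partitionEntropy_congr {π : α → γ} {π' : α → γ'}
    (h : ∀ f g, π f = π g ↔ π' f = π' g) :
    partitionEntropy S π = partitionEntropy S π' := by
  simp only [partitionEntropy, fiberCard, h]

lemma partitionEntropy_mono {π : α → γ} {π' : α → γ'} (h : π'.FactorsThrough π) :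
    partitionEntropy S π' ≤ partitionEntropy S π := by
  refine Finset.sum_le_sum fun f hf => Real.log_le_log ?_ ?_
  · exact div_pos (by exact_mod_cast Finset.card_pos.mpr ⟨f, hf⟩)
      (by exact_mod_cast fiberCard_pos hf)
  · refine div_le_div_of_nonneg_left (Nat.cast_nonneg _) (by exact_mod_cast fiberCard_pos hf) ?_
    exact_mod_cast Finset.card_le_card fun g hg => by
      simp only [Finset.mem_filter] at hg ⊢
      exact ⟨hg.1, h hg.2⟩

lemma sum_one_div_fiberCard [DecidableEq γ] (π : α → γ) :
    ∑ f ∈ S, (1 : ℝ) / fiberCard S π f = #(S.image π) := by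
  rw [← Finset.sum_image' (f := fun _ : γ => (1 : ℝ)), Finset.sum_const, nsmul_one]
  intro f hf
  rw [Finset.sum_congr rfl fun g hg => by rw [fiberCard_congr (Finset.mem_filter.mp hg).2],
    Finset.sum_const, nsmul_eq_mul,
    show #{g ∈ S | π g = π f} = fiberCard S π f from
      congrArg card (Finset.filter_congr_decidable _ _ _).symm]
  have : (0 : ℝ) < fiberCard S π f := by exact_mod_cast fiberCard_pos hf
  field_simp

lemma partitionEntropy_le_mul_log_card_image [DecidableEq γ] (π : α → γ) :
    partitionEntropy S π ≤ #S * Real.log #(S.image π) := by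
  rcases S.eq_empty_or_nonempty with rfl | hS
  · simp [partitionEntropy]
  have hn : (0 : ℝ) < #S := by exact_mod_cast hS.card_pos
  have hK : (0 : ℝ) < #(S.image π) := by exact_mod_cast (hS.image π).card_pos
  have hc : ∀ f ∈ S, (0 : ℝ) < fiberCard S π f :=
    fun f hf => Nat.cast_pos.mpr (fiberCard_pos hf)
  -- `log x ≤ x - 1` at `x = #S / (fiberCard f * #(S.image π))`, whose sum over `S` is `#S`
  calc partitionEntropy S π
      = ∑ f ∈ S, Real.log (#S / (fiberCard S π f * #(S.image π))) +
          #S * Real.log #(S.image π) := by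
        rw [partitionEntropy, ← nsmul_eq_mul, ← Finset.sum_const, ← Finset.sum_add_distrib]
        refine Finset.sum_congr rfl fun f hf => ?_
        rw [← div_div, Real.log_div (div_pos hn (hc f hf)).ne' hK.ne', sub_add_cancel]
    _ ≤ ∑ f ∈ S, ((#S / (fiberCard S π f * #(S.image π)) : ℝ) - 1) +
          #S * Real.log #(S.image π) := by
        gcongr with f hf
        exact Real.log_le_sub_one_of_pos (div_pos hn (mul_pos (hc f hf) hK))
    _ = #S * Real.log #(S.image π) := by
        have hsum := sum_one_div_fiberCard (S := S) π
        rw [Finset.sum_sub_distrib, Finset.sum_const, nsmul_one]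
        simp only [div_mul_eq_div_div_swap, div_eq_mul_one_div (_ / _), ← Finset.mul_sum, hsum]
        field_simp
        ring

end PartitionEntropy

section Submodularity
variable {α γ γ' δ : Type*} {S : Finset α} {a : α → γ} {b : α → γ'}

lemma sum_fiberCard_div_fiberCard_le (hab : a.FactorsThrough b) (r : α → δ) (g : α) :
    ∑ f ∈ S with b f = b g,
      (fiberCard S (fun f => (a f, r f)) f : ℝ) / fiberCard S (fun f => (b f, r f)) f
      ≤ fiberCard S a g := by
  calc ∑ f ∈ S with b f = b g,
        (fiberCard S (fun f => (a f, r f)) f : ℝ) / fiberCard S (fun f => (b f, r f)) f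
      = ∑ f ∈ S with b f = b g, ∑ h ∈ S with (a h, r h) = (a f, r f),
          (1 : ℝ) / fiberCard S (fun f => (b f, r f)) f := by
        refine Finset.sum_congr rfl fun f _ => ?_
        rw [Finset.sum_const, nsmul_eq_mul, div_eq_mul_one_div, fiberCard]
        congr 3
        exact Finset.filter_congr_decidable _ _ _
    _ = ∑ h ∈ S, ∑ f ∈ S with b f = b g ∧ (a f, r f) = (a h, r h),
          (1 : ℝ) / fiberCard S (fun f => (b f, r f)) f := by
        refine Finset.sum_comm' fun f h => ?_
        simp only [Finset.mem_filter]
        constructor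
        · rintro ⟨⟨hf, hfg⟩, hh, hhf⟩
          exact ⟨⟨hf, hfg, hhf.symm⟩, hh⟩
        · rintro ⟨⟨hf, hfg, hfh⟩, hh⟩
          exact ⟨⟨hf, hfg⟩, hh, hfh.symm⟩
    _ ≤ ∑ h ∈ S, if a h = a g then (1 : ℝ) else 0 := by
        refine Finset.sum_le_sum fun h _ => ?_
        rcases Finset.eq_empty_or_nonempty {f ∈ S | b f = b g ∧ (a f, r f) = (a h, r h)}
          with hT | ⟨f₀, hf₀⟩
        · rw [hT, Finset.sum_empty]
          positivity
        -- the `f` in the sum share `b` and `r`, so they all lie in one fiber of `(b, r)`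
        simp only [Finset.mem_filter, Prod.mk.injEq] at hf₀
        rw [if_pos (hf₀.2.2.1.symm.trans (hab hf₀.2.1))]
        refine sum_one_div_le_one fun f hf => Finset.card_le_card fun f' hf' => ?_
        simp only [Finset.mem_filter, Prod.mk.injEq] at hf hf' ⊢
        exact ⟨hf'.1, hf'.2.1.trans hf.2.1.symm, hf'.2.2.2.trans hf.2.2.2.symm⟩
    _ = fiberCard S a g := by rw [fiberCard, Finset.natCast_card_filter]

lemma sum_fiberCard_ratio_le (hab : a.FactorsThrough b) (r : α → δ) :
    ∑ f ∈ S, (fiberCard S b f * fiberCard S (fun f => (a f, r f)) f : ℝ) /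
      (fiberCard S (fun f => (b f, r f)) f * fiberCard S a f) ≤ #S := by
  calc ∑ f ∈ S, (fiberCard S b f * fiberCard S (fun f => (a f, r f)) f : ℝ) /
        (fiberCard S (fun f => (b f, r f)) f * fiberCard S a f)
      = ∑ f ∈ S, ∑ g ∈ S with b g = b f, (fiberCard S (fun f => (a f, r f)) f : ℝ) /
          (fiberCard S (fun f => (b f, r f)) f * fiberCard S a g) := by
        refine Finset.sum_congr rfl fun f _ => ?_
        rw [Finset.sum_congr rfl fun g hg => by
            rw [fiberCard_congr (hab (Finset.mem_filter.mp hg).2)],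
          Finset.sum_const, nsmul_eq_mul, ← fiberCard, mul_div_assoc]
    _ = ∑ g ∈ S, ∑ f ∈ S with b f = b g, (fiberCard S (fun f => (a f, r f)) f : ℝ) /
          (fiberCard S (fun f => (b f, r f)) f * fiberCard S a g) := by
        refine Finset.sum_comm' fun f g => ?_
        simp only [Finset.mem_filter]
        constructor
        · rintro ⟨hf, hg, hgf⟩
          exact ⟨⟨hf, hgf.symm⟩, hg⟩
        · rintro ⟨⟨hf, hfg⟩, hg⟩
          exact ⟨hf, hg, hfg.symm⟩
    _ ≤ ∑ _g ∈ S, (1 : ℝ) := by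
        refine Finset.sum_le_sum fun g hg => ?_
        have hpos : (0 : ℝ) < fiberCard S a g := by exact_mod_cast fiberCard_pos hg
        simp only [div_mul_eq_div_div]
        rw [← Finset.sum_div]
        exact (div_le_one hpos).mpr (sum_fiberCard_div_fiberCard_le hab r g)
    _ = #S := by rw [Finset.sum_const, nsmul_one]

lemma log_card_div_fiberCard {f : α} (hf : f ∈ S) {ε : Type*} (π : α → ε) :
    Real.log (#S / fiberCard S π f) = Real.log #S - Real.log (fiberCard S π f) :=
  Real.log_div (Nat.cast_ne_zero.mpr (Finset.card_ne_zero_of_mem hf))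
    (Nat.cast_ne_zero.mpr (fiberCard_pos hf).ne')

theorem partitionEntropy_prod_sub_le (hab : a.FactorsThrough b) (r : α → δ) :
    partitionEntropy S (fun f => (b f, r f)) - partitionEntropy S b ≤
      partitionEntropy S (fun f => (a f, r f)) - partitionEntropy S a := by
  set ratio : α → ℝ := fun f => (fiberCard S b f * fiberCard S (fun f => (a f, r f)) f : ℝ) /
    (fiberCard S (fun f => (b f, r f)) f * fiberCard S a f)
  have hratio : ∀ f ∈ S, 0 < ratio f := fun f hf =>
    div_pos (mul_pos (Nat.cast_pos.mpr (fiberCard_pos hf)) (Nat.cast_pos.mpr (fiberCard_pos hf)))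
      (mul_pos (Nat.cast_pos.mpr (fiberCard_pos hf)) (Nat.cast_pos.mpr (fiberCard_pos hf)))
  rw [← sub_nonpos]
  calc partitionEntropy S (fun f => (b f, r f)) - partitionEntropy S b -
        (partitionEntropy S (fun f => (a f, r f)) - partitionEntropy S a)
      = ∑ f ∈ S, Real.log (ratio f) := by
        simp only [partitionEntropy, ← Finset.sum_sub_distrib]
        refine Finset.sum_congr rfl fun f hf => ?_
        have h₁ := fiberCard_pos (π := b) hf
        have h₂ := fiberCard_pos (π := fun f => (a f, r f)) hf
        have h₃ := fiberCard_pos (π := fun f => (b f, r f)) hf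
        have h₄ := fiberCard_pos (π := a) hf
        simp only [log_card_div_fiberCard hf, ratio]
        rw [Real.log_div (by positivity) (by positivity),
          Real.log_mul (by positivity) (by positivity),
          Real.log_mul (by positivity) (by positivity)]
        ring
    _ ≤ ∑ f ∈ S, (ratio f - 1) :=
        Finset.sum_le_sum fun f hf => Real.log_le_sub_one_of_pos (hratio f hf)
    _ ≤ 0 := by
        rw [Finset.sum_sub_distrib, Finset.sum_const, nsmul_one, sub_nonpos]
        exact sum_fiberCard_ratio_le hab r

end Submodularity

section Shearer
variable {ι κ β : Type*}

theorem mul_le_sum_inter_of_submodular [DecidableEq ι] (H : Finset ι → ℝ)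
    (h_empty : H ∅ = 0) (h_mono : Monotone H)
    (h_sub : ∀ ⦃V W⦄, V ⊆ W → ∀ i, H (insert i W) - H W ≤ H (insert i V) - H V)
    (K : Finset κ) (B : κ → Finset ι) (t : ℕ) (T : Finset ι)
    (hcov : ∀ i ∈ T, t ≤ #{k ∈ K | i ∈ B k}) :
    t * H T ≤ ∑ k ∈ K, H (B k ∩ T) := by
  induction T using Finset.induction_on with
  | empty => simp [h_empty]
  | insert i T hi ih =>
    have ih := ih fun j hj => hcov j (Finset.mem_insert_of_mem hj)
    set Δ := H (insert i T) - H T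
    have hΔ : 0 ≤ Δ := sub_nonneg.mpr (h_mono (Finset.subset_insert i T))
    have hstep : ∀ k ∈ K,
        H (B k ∩ T) + (if i ∈ B k then Δ else 0) ≤ H (B k ∩ insert i T) := by
      intro k _
      split_ifs with hik
      · rw [Finset.inter_insert_of_mem hik]
        linarith [h_sub (Finset.inter_subset_right (s₁ := B k) (s₂ := T)) i]
      · rw [Finset.inter_insert_of_notMem hik, add_zero]
    calc (t : ℝ) * H (insert i T) = t * H T + t * Δ := by ring
      _ ≤ ∑ k ∈ K, H (B k ∩ T) + #{k ∈ K | i ∈ B k} * Δ := by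
          gcongr
          exact_mod_cast hcov i (Finset.mem_insert_self i T)
      _ = ∑ k ∈ K, (H (B k ∩ T) + if i ∈ B k then Δ else 0) := by
          rw [Finset.sum_add_distrib, Finset.sum_ite, Finset.sum_const_zero, Finset.sum_const,
            nsmul_eq_mul, add_zero]
      _ ≤ ∑ k ∈ K, H (B k ∩ insert i T) := Finset.sum_le_sum hstep

lemma restrict_insert_eq_iff [DecidableEq ι] (V : Finset ι) (i : ι) (f g : ι → β) :
    (insert i V).restrict f = (insert i V).restrict g ↔
      (V.restrict f, f i) = (V.restrict g, g i) := by
  simp only [Finset.restrict_def, funext_iff, Subtype.forall, Finset.forall_mem_insert,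
    Prod.mk.injEq]
  tauto

theorem mul_log_card_le_sum_log_card_image_restrict [DecidableEq ι] (S : Finset (ι → β))
    {T : Finset ι} (hT : Set.InjOn T.restrict (S : Set (ι → β))) (K : Finset κ)
    (B : κ → Finset ι) (t : ℕ)
    (hcov : ∀ i ∈ T, t ≤ #{k ∈ K | i ∈ B k}) :
    t * Real.log #S ≤ ∑ k ∈ K, Real.log #(S.image (B k).restrict) := by
  rcases S.eq_empty_or_nonempty with rfl | hS
  · simp
  obtain ⟨H, hH⟩ : ∃ H : Finset ι → ℝ, ∀ V, H V = partitionEntropy S V.restrict :=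
    ⟨_, fun _ => rfl⟩
  have h_mono : Monotone H := fun V W hVW => by
    rw [hH, hH]
    exact partitionEntropy_mono fun f g h => congrArg (Finset.restrict₂ (π := fun _ => β) hVW) h
  have h_sub : ∀ ⦃V W⦄, V ⊆ W → ∀ i, H (insert i W) - H W ≤ H (insert i V) - H V := by
    intro V W hVW i
    simp only [hH, partitionEntropy_congr (restrict_insert_eq_iff _ i)]
    exact partitionEntropy_prod_sub_le
      (fun f g h => congrArg (Finset.restrict₂ (π := fun _ => β) hVW) h) _
  have hn : (0 : ℝ) < #S := by exact_mod_cast hS.card_pos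
  refine le_of_mul_le_mul_left ?_ hn
  calc #S * (t * Real.log #S) = t * H T := by
        rw [hH, partitionEntropy_of_injOn hT]; ring
    _ ≤ ∑ k ∈ K, H (B k ∩ T) :=
        mul_le_sum_inter_of_submodular H ((hH ∅).trans (partitionEntropy_eq_zero _)) h_mono h_sub
          K B t T hcov
    _ ≤ ∑ k ∈ K, #S * Real.log #(S.image (B k).restrict) := by
        refine Finset.sum_le_sum fun k _ => (h_mono Finset.inter_subset_left).trans ?_
        rw [hH]
        exact partitionEntropy_le_mul_log_card_image _
    _ = #S * ∑ k ∈ K, Real.log #(S.image (B k).restrict) := (Finset.mul_sum ..).symm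

end Shearer

section Rectangles

lemma mem_Zrect {m n : ℕ} {c p : ℤ × ℤ} :
    p ∈ Zrect m n c ↔ c.1 ≤ p.1 ∧ p.1 < c.1 + m ∧ c.2 ≤ p.2 ∧ p.2 < c.2 + n := by
  simp only [Zrect, Finset.mem_image, Finset.mem_product, Finset.mem_range, Prod.exists,
    Prod.ext_iff]
  constructor
  · rintro ⟨a, b, ⟨ha, hb⟩, h₁, h₂⟩
    omega
  · rintro ⟨h₁, h₂, h₃, h₄⟩
    exact ⟨(p.1 - c.1).toNat, (p.2 - c.2).toNat, by omega, by omega, by omega⟩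

lemma card_Zrect (m n : ℕ) (c : ℤ × ℤ) : #(Zrect m n c) = m * n := by
  rw [Zrect, Finset.card_image_of_injective _ fun ab ab' h => by
      simp only [Prod.ext_iff, add_right_inj, Nat.cast_inj] at h
      exact Prod.ext h.1 h.2,
    Finset.card_product, Finset.card_range, Finset.card_range]

lemma Zrect_eq_image_add (m n : ℕ) (c : ℤ × ℤ) :
    Zrect m n c = (Zrect m n (0, 0)).image (· + c) := by
  ext p
  simp only [Finset.mem_image, mem_Zrect]
  constructor
  · intro hp
    exact ⟨p - c, by simp only [Prod.fst_sub, Prod.snd_sub]; omega, sub_add_cancel p c⟩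
  · rintro ⟨q, hq, rfl⟩
    simp only [Prod.fst_add, Prod.snd_add]
    omega

end Rectangles

lemma rectEntropy_mul_le {A : Type*} (U : Set ((ℤ × ℤ) → A)) {m n : ℕ} (hm : 0 < m)
    (hn : 0 < n) :
    rectEntropy U * (m * n) ≤ Real.log (patternCount U (Zrect m n (0, 0))) := by
  obtain ⟨m, rfl⟩ := Nat.exists_eq_add_one_of_ne_zero hm.ne'
  obtain ⟨n, rfl⟩ := Nat.exists_eq_add_one_of_ne_zero hn.ne'
  have hbdd : BddBelow (Set.range fun mn : ℕ × ℕ =>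
      (1 / (((mn.1 + 1) * (mn.2 + 1) : ℕ) : ℝ)) *
        Real.log (patternCount U (Zrect (mn.1 + 1) (mn.2 + 1) (0, 0)))) :=
    ⟨0, Set.forall_mem_range.mpr fun _ =>
      mul_nonneg (by positivity) (Real.log_natCast_nonneg _)⟩
  have h := ciInf_le hbdd (m, n)
  rw [one_div, inv_mul_eq_div, le_div_iff₀ (by positivity)] at h
  exact_mod_cast h

section LowerBound
open scoped Pointwise
variable {A : Type*} [Fintype A] {U : Set ((ℤ × ℤ) → A)}

lemma card_mul_log_patternCount_le
    (hshift : IsTranslationInvariant U) (Q L : Finset (ℤ × ℤ)) :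
    #L * Real.log (patternCount U Q) ≤ #(Q - L) * Real.log (patternCount U L) := by
  set S : Finset (Q → A) := (Set.toFinite (Q.restrict '' U)).toFinset
  set B : ℤ × ℤ → Finset Q := fun v => (L.image (· + v)).subtype (· ∈ Q)
  have hinj : Set.InjOn (Finset.univ : Finset Q).restrict (S : Set (Q → A)) :=
    fun f _ g _ h => funext fun i => congrFun h ⟨i, Finset.mem_univ i⟩
  -- every point `i` of `Q` lies in the translates `L + (i - p)`, `p ∈ L`
  have hcov : ∀ i ∈ (Finset.univ : Finset Q), #L ≤ #{v ∈ Q - L | i ∈ B v} := by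
    intro i _
    refine Finset.card_le_card_of_injOn (fun p => (i : ℤ × ℤ) - p) (fun p hp => ?_)
      fun p _ p' _ h => sub_right_injective h
    simp only [Finset.coe_filter, Set.mem_ofPred_eq, B, Finset.mem_subtype, Finset.mem_image]
    exact ⟨Finset.sub_mem_sub i.2 hp, p, hp, add_sub_cancel p _⟩
  have hproj : ∀ v, #(S.image (B v).restrict) ≤ patternCount U L := by
    intro v
    rw [← Set.ncard_coe_finset, Finset.coe_image, Set.Finite.coe_toFinset, Set.image_image]
    refine (Set.ncard_image_le_of_factorsThrough (F := (L.image (· + v)).restrict) ?_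
      (Set.toFinite _)).trans (patternCount_image_add_le hshift L v)
    intro x y h
    simp only [Finset.restrict_def, funext_iff, Subtype.forall, B, Finset.mem_subtype] at h ⊢
    exact fun p _ hp => h p hp
  have hS : #S = patternCount U Q := (Set.ncard_eq_toFinset_card _ _).symm
  calc #L * Real.log (patternCount U Q)
      ≤ ∑ v ∈ Q - L, Real.log #(S.image (B v).restrict) := by
        rw [← hS]
        exact mul_log_card_le_sum_log_card_image_restrict S hinj (Q - L) B #L hcov
    _ ≤ ∑ _v ∈ Q - L, Real.log (patternCount U L) := by
        exact Finset.sum_le_sum fun v _ => Real.log_natCast_le_log_natCast (hproj v)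
    _ = #(Q - L) * Real.log (patternCount U L) := by rw [Finset.sum_const, nsmul_eq_mul]

lemma exists_card_Zrect_sub_le (L : Finset (ℤ × ℤ)) :
    ∃ R : ℕ, ∀ s : ℕ, #(Zrect s s (0, 0) - L) ≤ (s + 2 * R) ^ 2 := by
  refine ⟨L.sup fun p => p.1.natAbs ⊔ p.2.natAbs, fun s => ?_⟩
  set R := L.sup fun p => p.1.natAbs ⊔ p.2.natAbs
  calc #(Zrect s s (0, 0) - L) ≤ #(Zrect (s + 2 * R) (s + 2 * R) (-R, -R)) := by
        refine Finset.card_le_card fun v hv => ?_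
        obtain ⟨q, hq, p, hp, rfl⟩ := Finset.mem_sub.mp hv
        have hpR : p.1.natAbs ⊔ p.2.natAbs ≤ R :=
          Finset.le_sup (f := fun p : ℤ × ℤ => p.1.natAbs ⊔ p.2.natAbs) hp
        simp only [mem_Zrect, Prod.fst_sub, Prod.snd_sub] at hq ⊢
        omega
    _ = (s + 2 * R) ^ 2 := by rw [card_Zrect, sq]

theorem rectEntropy_mul_card_le
    (hshift : IsTranslationInvariant U) (L : Finset (ℤ × ℤ)) :
    rectEntropy U * #L ≤ Real.log (patternCount U L) := by
  obtain ⟨R, hR⟩ := exists_card_Zrect_sub_le L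
  set C := Real.log (patternCount U L)
  have hC : 0 ≤ C := Real.log_natCast_nonneg _
  have hsquare : ∀ s : ℕ, rectEntropy U * #L ≤ (1 + 2 * R / (s + 1 : ℝ)) ^ 2 * C := by
    intro s
    have hs : (0 : ℝ) < s + 1 := by positivity
    have hcard : (#(Zrect (s + 1) (s + 1) (0, 0) - L) : ℝ) ≤ (s + 1 + 2 * R) ^ 2 := by
      exact_mod_cast hR (s + 1)
    have h := rectEntropy_mul_le U (Nat.succ_pos s) (Nat.succ_pos s)
    have hmain := card_mul_log_patternCount_le hshift (Zrect (s + 1) (s + 1) (0, 0)) L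
    rw [show (1 + 2 * R / (s + 1 : ℝ)) ^ 2 = (s + 1 + 2 * R) ^ 2 / (s + 1) ^ 2 by field_simp,
      div_mul_eq_mul_div, le_div_iff₀ (by positivity)]
    push_cast at h
    calc rectEntropy U * #L * (s + 1) ^ 2 = #L * (rectEntropy U * ((s + 1) * (s + 1))) := by ring
      _ ≤ #L * Real.log (patternCount U (Zrect (s + 1) (s + 1) (0, 0))) := by gcongr
      _ ≤ #(Zrect (s + 1) (s + 1) (0, 0) - L) * C := hmain
      _ ≤ (s + 1 + 2 * R) ^ 2 * C := by gcongr
  have hlim : Tendsto (fun s : ℕ => (1 + 2 * R / (s + 1 : ℝ)) ^ 2 * C) atTop (𝓝 C) := by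
    have h : Tendsto (fun s : ℕ => 2 * R / (s + 1 : ℝ)) atTop (𝓝 0) :=
      tendsto_const_nhds.div_atTop
        (tendsto_atTop_add_const_right _ _ tendsto_natCast_atTop_atTop)
    simpa using (((tendsto_const_nhds (x := (1 : ℝ))).add h).pow 2).mul_const C
  exact ge_of_tendsto' hlim hsquare

end LowerBound

theorem Int.exists_step_between {P : ℤ → Prop} {x y : ℤ} (hx : P x) (hy : ¬ P y) :
    ∃ z, min x y ≤ z ∧ z ≤ max x y ∧ P z ∧ (¬ P (z + 1) ∨ ¬ P (z - 1)) := by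
  by_contra! h
  rcases le_total x y with hxy | hxy
  · have hP : ∀ n, x ≤ n → n ≤ y → P n := fun n hn =>
      Int.leInduction (motive := fun n _ => n ≤ y → P n) (fun _ => hx)
        (fun n hxn ih hny => (h n (by omega) (by omega) (ih (by omega))).1) n hn
    exact hy (hP y hxy le_rfl)
  · have hP : ∀ n, n ≤ x → y ≤ n → P n := fun n hn =>
      Int.leInductionDown (motive := fun n _ => y ≤ n → P n) (fun _ => hx)
        (fun n hnx ih hyn => (h n (by omega) (by omega) (ih (by omega))).2) n hn
    exact hy (hP y hxy le_rfl)

section InnerBoundary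

def innerBoundary (L : Finset (ℤ × ℤ)) : Finset (ℤ × ℤ) :=
  {r ∈ L | (r.1 + 1, r.2) ∉ L ∨ (r.1 - 1, r.2) ∉ L ∨
    (r.1, r.2 + 1) ∉ L ∨ (r.1, r.2 - 1) ∉ L}

lemma card_filter_sub_notMem {G : Type*} [AddGroup G] [DecidableEq G] (L : Finset G) (e : G) :
    #{r ∈ L | r - e ∉ L} = #{r ∈ L | r + e ∉ L} := by
  have h : #{r ∈ L | r - e ∈ L} = #{r ∈ L | r + e ∈ L} :=
    Finset.card_nbij' (· - e) (· + e) (fun r hr => by simp_all) (fun r hr => by simp_all)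
      (fun r _ => sub_add_cancel r e) (fun r _ => add_sub_cancel_right r e)
  have h₁ := Finset.card_filter_add_card_filter_not (s := L) (fun r => r - e ∈ L)
  have h₂ := Finset.card_filter_add_card_filter_not (s := L) (fun r => r + e ∈ L)
  omega

lemma card_innerBoundary_le (L : Finset (ℤ × ℤ)) :
    #(innerBoundary L) ≤ 4 * #(latBoundary L) := by
  have hx : ∀ r : ℤ × ℤ, (r.1 + 1, r.2) = r + (1, 0) ∧ (r.1 - 1, r.2) = r - (1, 0) :=
    fun r => ⟨Prod.ext rfl (add_zero r.2).symm, Prod.ext rfl (sub_zero r.2).symm⟩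
  have hy : ∀ r : ℤ × ℤ, (r.1, r.2 + 1) = r + (0, 1) ∧ (r.1, r.2 - 1) = r - (0, 1) :=
    fun r => ⟨Prod.ext (add_zero r.1).symm rfl, Prod.ext (sub_zero r.1).symm rfl⟩
  have h₁ : #{r ∈ L | r + (1, 0) ∉ L} ≤ #(latBoundary L) :=
    Finset.card_le_card fun r hr => by
      simp only [Finset.mem_filter, latBoundary, latInterior, Finset.mem_sdiff, (hx r).1] at hr ⊢
      exact ⟨hr.1, fun h => hr.2 h.2.1⟩
  have h₂ : #{r ∈ L | r + (0, 1) ∉ L} ≤ #(latBoundary L) :=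
    Finset.card_le_card fun r hr => by
      simp only [Finset.mem_filter, latBoundary, latInterior, Finset.mem_sdiff, (hy r).1] at hr ⊢
      exact ⟨hr.1, fun h => hr.2 h.2.2.1⟩
  calc #(innerBoundary L)
      ≤ #{r ∈ L | r + (1, 0) ∉ L} + #{r ∈ L | r - (1, 0) ∉ L} +
          #{r ∈ L | r + (0, 1) ∉ L} + #{r ∈ L | r - (0, 1) ∉ L} := by
        simp only [innerBoundary, hx, hy, Finset.filter_or]
        refine (Finset.card_union_le _ _).trans ?_
        grw [Finset.card_union_le, Finset.card_union_le]
        omega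
    _ ≤ 4 * #(latBoundary L) := by
        rw [card_filter_sub_notMem, card_filter_sub_notMem]
        omega

lemma exists_mem_innerBoundary {m n : ℕ} {c p q : ℤ × ℤ} {L : Finset (ℤ × ℤ)}
    (hp : p ∈ Zrect m n c) (hpL : p ∈ L) (hq : q ∈ Zrect m n c) (hqL : q ∉ L) :
    ∃ r ∈ Zrect m n c, r ∈ innerBoundary L := by
  rw [mem_Zrect] at hp hq
  simp only [innerBoundary, Finset.mem_filter]
  -- walk from `p` horizontally to `(q.1, p.2)`, then vertically to `q`
  by_cases hc : (q.1, p.2) ∈ L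
  · obtain ⟨z, hz₁, hz₂, hzL, hz⟩ :=
      Int.exists_step_between (P := fun z => (q.1, z) ∈ L) hc hqL
    exact ⟨(q.1, z), mem_Zrect.mpr (by simp only; omega), hzL, by tauto⟩
  · obtain ⟨z, hz₁, hz₂, hzL, hz⟩ :=
      Int.exists_step_between (P := fun z => (z, p.2) ∈ L) hpL hc
    exact ⟨(z, p.2), mem_Zrect.mpr (by simp only; omega), hzL, by tauto⟩

end InnerBoundary

section Blocks
variable {k l : ℕ}

def blockIndex (k l : ℕ) (p : ℤ × ℤ) : ℤ × ℤ := (p.1 / k, p.2 / l)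

def block (k l : ℕ) (a : ℤ × ℤ) : Finset (ℤ × ℤ) := Zrect k l (k * a.1, l * a.2)

lemma mem_block_iff (hk : 0 < k) (hl : 0 < l) {p a : ℤ × ℤ} :
    p ∈ block k l a ↔ blockIndex k l p = a := by
  simp only [block, mem_Zrect, blockIndex, Prod.ext_iff,
    Int.ediv_eq_iff_of_pos (Int.natCast_pos.mpr hk),
    Int.ediv_eq_iff_of_pos (Int.natCast_pos.mpr hl)]
  constructor
  · rintro ⟨h₁, h₂, h₃, h₄⟩
    exact ⟨⟨by linarith, by linarith⟩, by linarith, by linarith⟩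
  · rintro ⟨⟨h₁, h₂⟩, h₃, h₄⟩
    exact ⟨by linarith, by linarith, by linarith, by linarith⟩

lemma card_biUnion_block (hk : 0 < k) (hl : 0 < l) (I : Finset (ℤ × ℤ)) :
    #(I.biUnion (block k l)) = k * l * #I := by
  rw [Finset.card_biUnion fun a _ b _ hab => Finset.disjoint_left.mpr fun _ hpa hpb =>
      hab (((mem_block_iff hk hl).mp hpa).symm.trans ((mem_block_iff hk hl).mp hpb)),
    Finset.sum_const_nat fun a _ => card_Zrect k l (k * a.1, l * a.2), mul_comm]

lemma subset_biUnion_block (hk : 0 < k) (hl : 0 < l) (L : Finset (ℤ × ℤ)) :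
    L ⊆ (L.image (blockIndex k l)).biUnion (block k l) := fun _ hp =>
  Finset.mem_biUnion.mpr ⟨_, Finset.mem_image_of_mem _ hp, (mem_block_iff hk hl).mpr rfl⟩

lemma mul_card_image_blockIndex_le (hk : 0 < k) (hl : 0 < l) (L : Finset (ℤ × ℤ)) :
    k * l * #(L.image (blockIndex k l)) ≤ #L + k * l * (4 * #(latBoundary L)) := by
  set I := L.image (blockIndex k l)
  have hgood : k * l * #{a ∈ I | block k l a ⊆ L} ≤ #L := by
    rw [← card_biUnion_block hk hl]
    exact Finset.card_le_card (Finset.biUnion_subset.mpr fun a ha => (Finset.mem_filter.mp ha).2)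
  have hbad : #{a ∈ I | ¬ block k l a ⊆ L} ≤ 4 * #(latBoundary L) := by
    refine le_trans (Finset.card_le_card fun a ha => ?_)
      ((Finset.card_image_le (f := blockIndex k l)).trans (card_innerBoundary_le L))
    obtain ⟨haI, hsub⟩ := Finset.mem_filter.mp ha
    obtain ⟨p, hpL, rfl⟩ := Finset.mem_image.mp haI
    obtain ⟨q, hq, hqL⟩ := Finset.not_subset.mp hsub
    obtain ⟨r, hr, hrL⟩ := exists_mem_innerBoundary ((mem_block_iff hk hl).mpr rfl) hpL hq hqL
    exact Finset.mem_image.mpr ⟨r, hrL, (mem_block_iff hk hl).mp hr⟩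
  calc k * l * #I
      = k * l * #{a ∈ I | block k l a ⊆ L} + k * l * #{a ∈ I | ¬ block k l a ⊆ L} := by
        rw [← mul_add, Finset.card_filter_add_card_filter_not]
    _ ≤ #L + k * l * (4 * #(latBoundary L)) := by gcongr

end Blocks

section UpperBound
variable {A : Type*} [Fintype A] {U : Set ((ℤ × ℤ) → A)}

theorem log_patternCount_le (hshift : IsTranslationInvariant U)
    {k l : ℕ} (hk : 0 < k) (hl : 0 < l) (L : Finset (ℤ × ℤ)) :
    Real.log (patternCount U L) ≤
      (#L / (k * l : ℝ) + 4 * #(latBoundary L)) *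
        Real.log (patternCount U (Zrect k l (0, 0))) := by
  set I := L.image (blockIndex k l)
  have hblock : ∀ a, patternCount U (block k l a) ≤ patternCount U (Zrect k l (0, 0)) := by
    intro a
    rw [block, Zrect_eq_image_add]
    exact patternCount_image_add_le hshift _ _
  have hcount : patternCount U L ≤ patternCount U (Zrect k l (0, 0)) ^ #I :=
    calc patternCount U L ≤ patternCount U (I.biUnion (block k l)) :=
          patternCount_mono (subset_biUnion_block hk hl L)
      _ ≤ ∏ a ∈ I, patternCount U (block k l a) := patternCount_biUnion_le I _
      _ ≤ patternCount U (Zrect k l (0, 0)) ^ #I :=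
          Finset.prod_le_pow_card _ _ _ fun a _ => hblock a
  have hI : (#I : ℝ) ≤ #L / (k * l : ℝ) + 4 * #(latBoundary L) := by
    rw [div_add' _ _ _ (by positivity), le_div_iff₀ (by positivity)]
    exact_mod_cast (mul_comm _ _).trans_le (mul_card_image_blockIndex_le hk hl L)
      |>.trans_eq (by ring)
  calc Real.log (patternCount U L) ≤ #I * Real.log (patternCount U (Zrect k l (0, 0))) := by
        rw [← Real.log_pow, ← Nat.cast_pow]
        exact Real.log_natCast_le_log_natCast hcount
    _ ≤ _ := by gcongr

end UpperBound

lemma Filter.tendsto_zero_of_limsup_eq_zero {ι : Type*} {f : Filter ι} [f.NeBot] {r : ι → ℝ}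
    (h₀ : ∀ᶠ i in f, 0 ≤ r i) (hbdd : f.IsBoundedUnder (· ≤ ·) r) (h : limsup r f = 0) :
    Tendsto r f (𝓝 0) :=
  tendsto_of_le_liminf_of_limsup_le (le_liminf_of_le hbdd.isCoboundedUnder_ge h₀) h.le hbdd
    (isBoundedUnder_of_eventually_ge h₀)

section Entropy
variable {A : Type*} [Fintype A] {U : Set ((ℤ × ℤ) → A)} {Ω : ℕ → Finset (ℤ × ℤ)}

lemma one_div_card_mul_log_patternCount_le_log_card (L : Finset (ℤ × ℤ)) :
    1 / (#L : ℝ) * Real.log (patternCount U L) ≤ Real.log (Fintype.card A) := by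
  rcases L.eq_empty_or_nonempty with rfl | hL
  · simpa using Real.log_natCast_nonneg _
  rw [one_div_mul_eq_div, div_le_iff₀' (Nat.cast_pos.mpr hL.card_pos), ← Real.log_pow,
    ← Nat.cast_pow]
  exact Real.log_natCast_le_log_natCast (patternCount_le_card_pow L)

theorem rectEntropy_le_entropyAlong
    (hshift : IsTranslationInvariant U)
    (hΩ : ∃ᶠ n in atTop, (Ω n).Nonempty) :
    rectEntropy U ≤ entropyAlong U Ω := by
  refine le_limsup_of_frequently_le (hΩ.mono fun n hn => ?_)
    (isBoundedUnder_of ⟨_, fun n => one_div_card_mul_log_patternCount_le_log_card (Ω n)⟩)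
  rw [one_div_mul_eq_div, le_div_iff₀ (Nat.cast_pos.mpr hn.card_pos)]
  exact rectEntropy_mul_card_le hshift (Ω n)

theorem entropyAlong_le_rectEntropy
    (hshift : IsTranslationInvariant U)
    (hΩ : Tendsto (fun n => (#(latBoundary (Ω n)) : ℝ) / #(Ω n)) atTop (𝓝 0)) :
    entropyAlong U Ω ≤ rectEntropy U := by
  refine le_ciInf fun mn => ?_
  set a := 1 / (((mn.1 + 1) * (mn.2 + 1) : ℕ) : ℝ) *
    Real.log (patternCount U (Zrect (mn.1 + 1) (mn.2 + 1) (0, 0)))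
  set b := 4 * Real.log (patternCount U (Zrect (mn.1 + 1) (mn.2 + 1) (0, 0)))
  have hbound : ∀ n, 1 / (#(Ω n) : ℝ) * Real.log (patternCount U (Ω n)) ≤
      a + b * (#(latBoundary (Ω n)) / #(Ω n)) := by
    intro n
    rcases (Ω n).eq_empty_or_nonempty with hn | hn
    · simp only [hn, Finset.card_empty, Nat.cast_zero, div_zero, zero_mul, mul_zero, add_zero]
      exact mul_nonneg (by positivity) (Real.log_natCast_nonneg _)
    have hcard : (0 : ℝ) < #(Ω n) := Nat.cast_pos.mpr hn.card_pos
    calc 1 / (#(Ω n) : ℝ) * Real.log (patternCount U (Ω n))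
        ≤ 1 / (#(Ω n) : ℝ) * ((#(Ω n) / ((mn.1 + 1 : ℕ) * (mn.2 + 1 : ℕ) : ℝ) +
            4 * #(latBoundary (Ω n))) *
              Real.log (patternCount U (Zrect (mn.1 + 1) (mn.2 + 1) (0, 0)))) := by
          gcongr
          exact log_patternCount_le hshift (Nat.succ_pos _) (Nat.succ_pos _) (Ω n)
      _ = a + b * (#(latBoundary (Ω n)) / #(Ω n)) := by
          simp only [a, b, Nat.cast_mul]
          field_simp
  have hlim :
      Tendsto (fun n => a + b * (#(latBoundary (Ω n)) / #(Ω n) : ℝ)) atTop (𝓝 a) := by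
    simpa using tendsto_const_nhds.add (hΩ.const_mul b)
  calc entropyAlong U Ω
      ≤ limsup (fun n => a + b * (#(latBoundary (Ω n)) / #(Ω n) : ℝ)) atTop :=
        limsup_le_limsup (Eventually.of_forall hbound)
          (isBoundedUnder_of ⟨0, fun _ => mul_nonneg (by positivity)
            (Real.log_natCast_nonneg _)⟩).isCoboundedUnder_le
          hlim.isBoundedUnder_le
    _ = a := hlim.limsup_eq

end Entropy

theorem entropyAlong_eq_rectEntropy_of_directional_blockGluing_general {A : Type*} [Fintype A]
    [TopologicalSpace A]
    (U : Set ((ℤ × ℤ) → A)) (hU : IsShiftSpace U)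
    (Ω : ℕ → Finset (ℤ × ℤ)) (hΩ : IsExpandingSystem Ω)
    (hbd : Filter.limsup
      (fun n => ((latBoundary (Ω n)).card : ℝ) / ((Ω n).card : ℝ)) Filter.atTop = 0) :
    entropyAlong U Ω = rectEntropy U := by
  obtain ⟨-, -, hshift⟩ := hU
  have hnonempty : ∃ᶠ n in atTop, (Ω n).Nonempty := frequently_atTop.mpr fun n =>
    ⟨n + 1, n.le_succ, (Finset.exists_of_ssubset (hΩ.1 n)).imp fun _ h => h.1⟩
  have hratio : Tendsto (fun n => (#(latBoundary (Ω n)) : ℝ) / #(Ω n)) atTop (𝓝 0) := by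
    have hle : ∀ n, #(latBoundary (Ω n)) ≤ #(Ω n) := fun n => Finset.card_le_card sdiff_subset
    refine tendsto_zero_of_limsup_eq_zero (Eventually.of_forall fun n => by positivity)
      (isBoundedUnder_of ⟨1, fun n =>
        div_le_one_of_le₀ (by exact_mod_cast hle n) (by positivity)⟩)
      hbd
  exact le_antisymm (entropyAlong_le_rectEntropy hshift hratio)
    (rectEntropy_le_entropyAlong hshift hnonempty)

/-- Corollary 3.4: for a horizontally (resp. vertically) block gluing shift
space and a horizontally (resp. vertically) decomposable expanding system with negligible
boundary, `h_Ω(U) = h_r(U)`. -/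
theorem entropyAlong_eq_rectEntropy_of_directional_blockGluing {A : Type*} [Fintype A]
    [TopologicalSpace A] [DiscreteTopology A] (hcard : 2 ≤ Fintype.card A)
    (U : Set ((ℤ × ℤ) → A)) (hU : IsShiftSpace U)
    (Ω : ℕ → Finset (ℤ × ℤ)) (hΩ : IsExpandingSystem Ω)
    (hbd : Filter.limsup
      (fun n => ((latBoundary (Ω n)).card : ℝ) / ((Ω n).card : ℝ)) Filter.atTop = 0)
    (hcase : ((∃ M : ℕ, 1 ≤ M ∧ HorizBlockGluingWithGap U M) ∧ HorizDecomposable Ω) ∨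
      ((∃ M : ℕ, 1 ≤ M ∧ VertBlockGluingWithGap U M) ∧ VertDecomposable Ω)) :
    entropyAlong U Ω = rectEntropy U :=
  entropyAlong_eq_rectEntropy_of_directional_blockGluing_general U hU Ω hΩ hbd
end

section
/- Let Ω = {Ω(n)}_{n≥1} be an expanding system of finite subsets of ℤ². If there exists m ≥ 1 such that limsup_{n→∞} β_m^{(h)}(n)/|Ω(n)| > 0 or limsup_{n→∞} β_m^{(v)}(n)/|Ω(n)| > 0, then there exists an additive shift of finite type U ⊂ {0,1}^{ℤ²} such that h_Ω(U) > h_r(U). -/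
open Filter
open scoped Classical

/-!
The witness is the shift `U` of configurations with no `m + 1` consecutive ones along a row
(along a column in the vertical case, which is the transpose). Its rectangular entropy is below
`log 2`, because the all-ones word never appears on a row of length `m + 1`. Conversely, filling
the complement of a finite set `L` with zeros decouples the maximal horizontal runs of `L`, so
patterns on `L` are at least as many as products of patterns on its runs: a run of length exactly
`m` carries all `2 ^ m` words, and any run of length `ℓ` at least `exp (ℓ h_r(U))` words. Hence
`log Γ(L) ≥ β log 2 + (|L| - β) h_r(U)` with `β = β_m^{(h)}(L)`, and a positive upper density
of such points lifts `h_Ω(U)` above `h_r(U)`.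
-/

section Windows

lemma mem_Zrect_s8 {k l : ℕ} {c q : ℤ × ℤ} :
    q ∈ Zrect k l c ↔ c.1 ≤ q.1 ∧ q.1 < c.1 + k ∧ c.2 ≤ q.2 ∧ q.2 < c.2 + l := by
  simp only [Zrect, Finset.mem_image, Finset.mem_product, Finset.mem_range, Prod.ext_iff]
  constructor
  · rintro ⟨⟨a, b⟩, ⟨ha, hb⟩, h1, h2⟩
    simp only at ha hb h1 h2
    omega
  · rintro ⟨h1, h2, h3, h4⟩
    exact ⟨((q.1 - c.1).toNat, (q.2 - c.2).toNat), ⟨by omega, by omega⟩, by omega, by omega⟩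

lemma card_Zrect_s8 (k l : ℕ) (c : ℤ × ℤ) : (Zrect k l c).card = k * l := by
  rw [Zrect, Finset.card_image_of_injective _ fun a b hab => by
    simp only [Prod.ext_iff] at hab
    exact Prod.ext (by omega) (by omega)]
  simp

lemma image_add_Zrect (k l : ℕ) (c : ℤ × ℤ) :
    (Zrect k l (0, 0)).image (· + c) = Zrect k l c := by
  ext q
  simp only [Finset.mem_image, mem_Zrect_s8]
  constructor
  · rintro ⟨p, hp, rfl⟩
    simp only [Prod.fst_add, Prod.snd_add] at hp ⊢
    omega
  · intro hq
    refine ⟨q - c, ?_, sub_add_cancel q c⟩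
    simp only [Prod.fst_sub, Prod.snd_sub]
    omega

lemma image_swap_Zrect (k l : ℕ) (c : ℤ × ℤ) :
    (Zrect k l c).image Prod.swap = Zrect l k c.swap := by
  ext q
  simp only [Finset.mem_image, mem_Zrect_s8, Prod.fst_swap, Prod.snd_swap]
  constructor
  · rintro ⟨p, hp, rfl⟩
    simp only [Prod.fst_swap, Prod.snd_swap]
    omega
  · intro hq
    exact ⟨q.swap, by simp only [Prod.fst_swap, Prod.snd_swap]; omega, Prod.swap_swap q⟩

lemma lineSegment_one_zero (n : ℕ) : lineSegment (1, 0) n = Zrect n 1 (0, 0) := by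
  ext q
  simp only [lineSegment, Finset.mem_image, Finset.mem_range, mem_Zrect_s8, Prod.ext_iff]
  constructor
  · rintro ⟨s, hs, h1, h2⟩
    omega
  · rintro ⟨h1, h2, h3, h4⟩
    exact ⟨q.1.toNat, by omega, by omega, by omega⟩

lemma image_swap_lineSegment (e : ℤ × ℤ) (n : ℕ) :
    (lineSegment e n).image Prod.swap = lineSegment e.swap n := by
  rw [lineSegment, lineSegment, Finset.image_image]
  rfl

end Windows

section PatternCount

variable {A : Type*}

lemma patternCount_comp (U : Set ((ℤ × ℤ) → A)) (φ : ℤ × ℤ → ℤ × ℤ) (L : Finset (ℤ × ℤ)) :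
    patternCount ((· ∘ φ) '' U) L = patternCount U (L.image φ) := by
  let e : L → L.image φ := fun p => ⟨φ p, Finset.mem_image_of_mem φ p.2⟩
  have he : Function.Surjective e := by
    rintro ⟨_, hq⟩
    obtain ⟨p, hp, rfl⟩ := Finset.mem_image.mp hq
    exact ⟨⟨p, hp⟩, rfl⟩
  unfold patternCount
  rw [← Set.ncard_image_of_injective _ he.injective_comp_right, Set.image_image,
    Set.image_image]
  rfl

lemma patternCount_image_add {U : Set ((ℤ × ℤ) → A)}
    (hU : ∀ v : ℤ × ℤ, ∀ x ∈ U, (fun p => x (p + v)) ∈ U) (v : ℤ × ℤ) (L : Finset (ℤ × ℤ)) :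
    patternCount U (L.image (· + v)) = patternCount U L := by
  have hshift : (· ∘ (· + v)) '' U = U := by
    refine (Set.image_subset_iff.mpr fun x hx => hU v x hx).antisymm fun x hx => ?_
    exact ⟨fun p => x (p + -v), hU (-v) x hx, funext fun p => by simp⟩
  rw [← patternCount_comp, hshift]

lemma patternCount_Zrect {U : Set ((ℤ × ℤ) → A)}
    (hU : ∀ v : ℤ × ℤ, ∀ x ∈ U, (fun p => x (p + v)) ∈ U) (k l : ℕ) (c : ℤ × ℤ) :
    patternCount U (Zrect k l c) = patternCount U (Zrect k l (0, 0)) := by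
  rw [← image_add_Zrect, patternCount_image_add hU]

variable [Finite A]

lemma patternCount_pos {U : Set ((ℤ × ℤ) → A)} (hU : U.Nonempty) (L : Finset (ℤ × ℤ)) :
    0 < patternCount U L :=
  (Set.ncard_pos (Set.toFinite _)).mpr (hU.image _)

lemma patternCount_le (U : Set ((ℤ × ℤ) → A)) (L : Finset (ℤ × ℤ)) :
    patternCount U L ≤ Nat.card A ^ L.card := by
  calc patternCount U L ≤ (Set.univ : Set (L → A)).ncard :=
        Set.ncard_le_ncard (Set.subset_univ _)
    _ = Nat.card A ^ L.card := by simp [Set.ncard_univ, Nat.card_fun]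

lemma patternCount_mul_le_union {U : Set ((ℤ × ℤ) → A)} {S T : Finset (ℤ × ℤ)}
    (hglue : ∀ y ∈ U, ∀ z ∈ U, ∃ x ∈ U, (∀ p ∈ S, x p = y p) ∧ ∀ p ∈ T, x p = z p) :
    patternCount U S * patternCount U T ≤ patternCount U (S ∪ T) := by
  let ρ : ((S ∪ T : Finset (ℤ × ℤ)) → A) → (S → A) × (T → A) := fun w =>
    (fun p => w ⟨p, Finset.mem_union_left T p.2⟩, fun p => w ⟨p, Finset.mem_union_right S p.2⟩)
  have hsub : ((fun x => fun p : S => x (p : ℤ × ℤ)) '' U) ×ˢ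
      ((fun x => fun p : T => x (p : ℤ × ℤ)) '' U) ⊆
      ρ '' ((fun x => fun p : (S ∪ T : Finset (ℤ × ℤ)) => x (p : ℤ × ℤ)) '' U) := by
    rintro ⟨_, _⟩ ⟨⟨y, hy, rfl⟩, ⟨z, hz, rfl⟩⟩
    obtain ⟨x, hx, hxy, hxz⟩ := hglue y hy z hz
    refine ⟨_, ⟨x, hx, rfl⟩, ?_⟩
    exact Prod.ext (funext fun p => hxy p p.2) (funext fun p => hxz p p.2)
  unfold patternCount
  rw [← Set.ncard_prod]
  exact (Set.ncard_le_ncard hsub).trans (Set.ncard_image_le (Set.toFinite _))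

end PatternCount

section Entropy

variable {A : Type*}

lemma rectEntropy_le (U : Set ((ℤ × ℤ) → A)) (a b : ℕ) :
    rectEntropy U ≤ (1 / (((a + 1) * (b + 1) : ℕ) : ℝ)) *
      Real.log (patternCount U (Zrect (a + 1) (b + 1) (0, 0))) :=
  ciInf_le ⟨0, fun _ ⟨_, hmn⟩ => hmn ▸ mul_nonneg (by positivity) (Real.log_natCast_nonneg _)⟩
    (a, b)

lemma mul_rectEntropy_le_log (U : Set ((ℤ × ℤ) → A)) {ℓ : ℕ} (hℓ : 0 < ℓ) :
    ℓ * rectEntropy U ≤ Real.log (patternCount U (Zrect ℓ 1 (0, 0))) := by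
  obtain ⟨a, rfl⟩ : ∃ a, ℓ = a + 1 := ⟨ℓ - 1, by omega⟩
  have h := rectEntropy_le U a 0
  rw [Nat.zero_add, Nat.mul_one, one_div_mul_eq_div, le_div_iff₀ (by positivity)] at h
  linarith

lemma rectEntropy_comp_swap (U : Set ((ℤ × ℤ) → A)) :
    rectEntropy ((· ∘ Prod.swap) '' U) = rectEntropy U := by
  refine Equiv.iInf_congr (Equiv.prodComm ℕ ℕ) fun ab => ?_
  rw [Equiv.prodComm_apply, Prod.fst_swap, Prod.snd_swap, patternCount_comp, image_swap_Zrect,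
    Nat.mul_comm]
  rfl

lemma entropyAlong_comp_swap (U : Set ((ℤ × ℤ) → A)) (Ω : ℕ → Finset (ℤ × ℤ)) :
    entropyAlong ((· ∘ Prod.swap) '' U) Ω = entropyAlong U fun n => (Ω n).image Prod.swap := by
  unfold entropyAlong
  simp only [patternCount_comp, Finset.card_image_of_injective _ Prod.swap_injective]

lemma one_div_card_mul_log_patternCount_le [Finite A] {U : Set ((ℤ × ℤ) → A)} (hU : U.Nonempty)
    (L : Finset (ℤ × ℤ)) :
    1 / (L.card : ℝ) * Real.log (patternCount U L) ≤ Real.log (Nat.card A) := by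
  rcases L.eq_empty_or_nonempty with rfl | hL
  · simpa using Real.log_natCast_nonneg _
  have hlog : Real.log (patternCount U L) ≤ L.card * Real.log (Nat.card A) := by
    rw [← Real.log_pow, ← Nat.cast_pow]
    exact Real.log_le_log (by exact_mod_cast patternCount_pos hU L)
      (by exact_mod_cast patternCount_le U L)
  rw [one_div_mul_eq_div, div_le_iff₀ (by exact_mod_cast hL.card_pos)]
  linarith

end Entropy

section FiniteType

variable {A : Type*}

lemma IsSFT.isClosed [TopologicalSpace A] [DiscreteTopology A] {U : Set ((ℤ × ℤ) → A)}
    (hU : IsSFT U) : IsClosed U := by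
  obtain ⟨F, P, rfl⟩ := hU
  simp only [Set.ofPred_forall]
  exact isClosed_iInter fun v => (isClosed_discrete P).preimage
    (continuous_pi fun p => continuous_apply _)

lemma IsSFT.translate_mem {U : Set ((ℤ × ℤ) → A)} (hU : IsSFT U) (v : ℤ × ℤ) {x : (ℤ × ℤ) → A}
    (hx : x ∈ U) : (fun p => x (p + v)) ∈ U := by
  obtain ⟨F, P, rfl⟩ := hU
  intro w
  simpa only [add_right_comm] using hx (w + v)

lemma IsSFT.isShiftSpace [TopologicalSpace A] [DiscreteTopology A] {U : Set ((ℤ × ℤ) → A)}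
    (hU : IsSFT U) (hne : U.Nonempty) : IsShiftSpace U :=
  ⟨hne, hU.isClosed, fun v _ hx => hU.translate_mem v hx⟩

end FiniteType

/-- The configurations without `m + 1` consecutive ones in direction `e`. -/
def avoidsRuns (e : ℤ × ℤ) (m : ℕ) : Set ((ℤ × ℤ) → Fin 2) :=
  {x | ∀ v : ℤ × ℤ, ∃ q : lineSegment e (m + 1), x (v + q) = 0}

section AvoidsRuns

variable (e : ℤ × ℤ) (m : ℕ)

lemma avoidsRuns_isSFT : IsSFT (avoidsRuns e m) :=
  ⟨lineSegment e (m + 1), {f | ∃ q, f q = 0}, rfl⟩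

lemma avoidsRuns_nonempty : (avoidsRuns e m).Nonempty :=
  ⟨0, fun _ => ⟨⟨(0, 0), Finset.mem_image.mpr ⟨0, by simp⟩⟩, rfl⟩⟩

lemma avoidsRuns_isShiftSpace : IsShiftSpace (avoidsRuns e m) :=
  (avoidsRuns_isSFT e m).isShiftSpace (avoidsRuns_nonempty e m)

lemma image_comp_swap_avoidsRuns :
    (· ∘ Prod.swap) '' avoidsRuns e m = avoidsRuns e.swap m := by
  have hswap : ∀ {e' : ℤ × ℤ} {x : (ℤ × ℤ) → Fin 2}, x ∈ avoidsRuns e' m →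
      x ∘ Prod.swap ∈ avoidsRuns e'.swap m := by
    intro e' x hx v
    obtain ⟨⟨q, hq⟩, hxq⟩ := hx v.swap
    refine ⟨⟨q.swap, ?_⟩, by simpa using hxq⟩
    rw [← image_swap_lineSegment]
    exact Finset.mem_image_of_mem _ hq
  refine Set.Subset.antisymm (Set.image_subset_iff.mpr fun x => hswap) fun y hy => ?_
  refine ⟨y ∘ Prod.swap, by simpa using hswap hy, ?_⟩
  ext p
  simp

variable {m}

lemma mem_avoidsRuns_one_zero {x : (ℤ × ℤ) → Fin 2} :
    x ∈ avoidsRuns (1, 0) m ↔ ∀ p : ℤ × ℤ, ∃ q ∈ Zrect (m + 1) 1 p, x q = 0 := by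
  refine forall_congr' fun p => ?_
  rw [lineSegment_one_zero, ← image_add_Zrect (m + 1) 1 p]
  simp only [Subtype.exists, exists_prop, Finset.mem_image, exists_exists_and_eq_and, add_comm p]

end AvoidsRuns

section HorizontalRuns

variable (L : Finset (ℤ × ℤ)) (q : ℤ × ℤ)

lemma exists_right_exit : ∃ k : ℕ, (q.1 + k + 1, q.2) ∉ L := by
  have hinj : Function.Injective fun k : ℕ => (q.1 + k + 1, q.2) := fun a b h => by
    simpa using h
  obtain ⟨_, ⟨k, rfl⟩, hk⟩ := (Set.infinite_range_of_injective hinj).exists_notMem_finset L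
  exact ⟨k, hk⟩

lemma exists_left_exit : ∃ k : ℕ, (q.1 - k - 1, q.2) ∉ L := by
  have hinj : Function.Injective fun k : ℕ => (q.1 - k - 1, q.2) := fun a b h => by
    simpa using h
  obtain ⟨_, ⟨k, rfl⟩, hk⟩ := (Set.infinite_range_of_injective hinj).exists_notMem_finset L
  exact ⟨k, hk⟩

noncomputable def runRight : ℕ := Nat.find (exists_right_exit L q)

noncomputable def runLeft : ℕ := Nat.find (exists_left_exit L q)

/-- The maximal horizontal segment of `L` through `q` (for `q ∈ L`). -/
noncomputable def horizRun : Finset (ℤ × ℤ) :=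
  Zrect (runLeft L q + runRight L q + 1) 1 (q.1 - runLeft L q, q.2)

lemma notMem_left_exit : (q.1 - runLeft L q - 1, q.2) ∉ L :=
  Nat.find_spec (exists_left_exit L q)

lemma notMem_right_exit : (q.1 + runRight L q + 1, q.2) ∉ L :=
  Nat.find_spec (exists_right_exit L q)

lemma mem_of_lt_runLeft {k : ℕ} (hk : k < runLeft L q) : (q.1 - k - 1, q.2) ∈ L :=
  not_not.mp (Nat.find_min (exists_left_exit L q) hk)

lemma mem_of_lt_runRight {k : ℕ} (hk : k < runRight L q) : (q.1 + k + 1, q.2) ∈ L :=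
  not_not.mp (Nat.find_min (exists_right_exit L q) hk)

variable {L q}

lemma mem_horizRun {p : ℤ × ℤ} :
    p ∈ horizRun L q ↔ p.2 = q.2 ∧ q.1 - runLeft L q ≤ p.1 ∧ p.1 ≤ q.1 + runRight L q := by
  rw [horizRun, mem_Zrect_s8]
  omega

lemma mem_horizRun_self : q ∈ horizRun L q :=
  mem_horizRun.mpr ⟨rfl, by omega, by omega⟩

lemma card_horizRun : (horizRun L q).card = runLeft L q + runRight L q + 1 := by
  rw [horizRun, card_Zrect_s8, Nat.mul_one]

lemma horizRun_subset (hq : q ∈ L) : horizRun L q ⊆ L := by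
  intro p hp
  obtain ⟨h2, hl, hr⟩ := mem_horizRun.mp hp
  rcases lt_trichotomy p.1 q.1 with h | h | h
  · convert mem_of_lt_runLeft L q (k := (q.1 - p.1 - 1).toNat) (by omega) using 1
    exact Prod.ext (by simp only; omega) h2
  · rwa [show p = q from Prod.ext h h2]
  · convert mem_of_lt_runRight L q (k := (p.1 - q.1 - 1).toNat) (by omega) using 1
    exact Prod.ext (by simp only; omega) h2

lemma subset_horizRun {k : ℕ} {c : ℤ × ℤ} (hW : Zrect k 1 c ⊆ L) (hq : q ∈ Zrect k 1 c) :
    Zrect k 1 c ⊆ horizRun L q := by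
  intro p hp
  rw [mem_Zrect_s8] at hp hq
  refine mem_horizRun.mpr ⟨by omega, not_lt.mp fun h => notMem_left_exit L q (hW ?_),
    not_lt.mp fun h => notMem_right_exit L q (hW ?_)⟩
  all_goals
    rw [mem_Zrect_s8]
    omega

lemma horizRun_eq_of_mem {q' : ℤ × ℤ} (hq : q ∈ L) (hq' : q' ∈ horizRun L q) :
    horizRun L q' = horizRun L q := by
  have h₁ : horizRun L q ⊆ horizRun L q' := subset_horizRun (horizRun_subset hq) hq'
  exact (subset_horizRun (horizRun_subset (horizRun_subset hq hq')) (h₁ mem_horizRun_self)).antisymm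
    h₁

lemma subset_or_disjoint_horizRun {k : ℕ} {c : ℤ × ℤ} (hq : q ∈ L) (hW : Zrect k 1 c ⊆ L) :
    Zrect k 1 c ⊆ horizRun L q ∨ Disjoint (Zrect k 1 c) (horizRun L q) := by
  refine or_iff_not_imp_right.mpr fun h => ?_
  obtain ⟨r, hrW, hrq⟩ := Finset.not_disjoint_iff.mp h
  exact horizRun_eq_of_mem hq hrq ▸ subset_horizRun hW hrW

lemma horizRun_sdiff {q₀ : ℤ × ℤ} (hq₀ : q₀ ∈ L) (hq : q ∈ L \ horizRun L q₀) :
    horizRun (L \ horizRun L q₀) q = horizRun L q := by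
  obtain ⟨hqL, hqS⟩ := Finset.mem_sdiff.mp hq
  have hdisj : Disjoint (horizRun L q) (horizRun L q₀) :=
    (subset_or_disjoint_horizRun hq₀ (horizRun_subset hqL)).resolve_left
      fun h => hqS (h mem_horizRun_self)
  have hsub := subset_horizRun ((horizRun_subset hq).trans Finset.sdiff_subset) mem_horizRun_self
  exact hsub.antisymm
    (subset_horizRun (Finset.subset_sdiff.mpr ⟨horizRun_subset hqL, hdisj⟩) mem_horizRun_self)

lemma hasHorizLength_iff (hq : q ∈ L) (ℓ : ℕ) :
    HasHorizLength L q ℓ ↔ ℓ = (horizRun L q).card := by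
  have hwin : ∀ {k c}, Zrect k 1 c ⊆ L → q ∈ Zrect k 1 c → k ≤ (horizRun L q).card :=
    fun hW hqW => by simpa [card_Zrect_s8] using Finset.card_le_card (subset_horizRun hW hqW)
  have hrun : ∃ c, q ∈ Zrect (horizRun L q).card 1 c ∧ Zrect (horizRun L q).card 1 c ⊆ L :=
    ⟨_, by rw [card_horizRun]; exact ⟨mem_horizRun_self, horizRun_subset hq⟩⟩
  constructor
  · rintro ⟨-, ⟨c, hqc, hcL⟩, hmax⟩
    exact (hwin hcL hqc).antisymm (not_lt.mp fun h => hmax _ h hrun)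
  · rintro rfl
    exact ⟨by rw [card_horizRun]; omega, hrun, fun ℓ hℓ ⟨c, hqc, hcL⟩ => by
      have := hwin hcL hqc; omega⟩

lemma betaHoriz_eq_sdiff_horizRun (m : ℕ) {q₀ : ℤ × ℤ} (hq₀ : q₀ ∈ L) :
    betaHoriz m L = betaHoriz m (L \ horizRun L q₀) +
      if (horizRun L q₀).card = m then m else 0 := by
  set S := horizRun L q₀
  have hS : ∀ q ∈ S, HasHorizLength L q m ↔ m = S.card := fun q hq => by
    rw [hasHorizLength_iff (horizRun_subset hq₀ hq), horizRun_eq_of_mem hq₀ hq]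
  have hL' : ∀ q ∈ L \ S, HasHorizLength L q m ↔ HasHorizLength (L \ S) q m := fun q hq => by
    rw [hasHorizLength_iff (Finset.mem_sdiff.mp hq).1, hasHorizLength_iff hq, horizRun_sdiff hq₀ hq]
  unfold betaHoriz
  rw [← Finset.sdiff_union_of_subset (horizRun_subset hq₀), Finset.filter_union,
    Finset.card_union_of_disjoint (Finset.disjoint_filter_filter Finset.sdiff_disjoint),
    Finset.sdiff_union_of_subset (horizRun_subset hq₀), Finset.filter_congr hL']
  congr 1
  split_ifs with hm
  · rw [Finset.filter_true_of_mem fun q hq => (hS q hq).mpr hm.symm, hm]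
  · rw [Finset.filter_false_of_mem fun q hq h => hm ((hS q hq).mp h).symm, Finset.card_empty]

lemma horizRun_eq_Zrect :
    horizRun L q = Zrect (horizRun L q).card 1 (q.1 - runLeft L q, q.2) := by
  rw [card_horizRun]
  rfl

lemma card_mul_rectEntropy_le_log_patternCount_horizRun {A : Type*} {U : Set ((ℤ × ℤ) → A)}
    (hU : ∀ v : ℤ × ℤ, ∀ x ∈ U, (fun p => x (p + v)) ∈ U) (L : Finset (ℤ × ℤ)) (q : ℤ × ℤ) :
    (horizRun L q).card * rectEntropy U ≤ Real.log (patternCount U (horizRun L q)) := by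
  rw [horizRun_eq_Zrect, patternCount_Zrect hU, card_Zrect_s8, Nat.mul_one]
  exact mul_rectEntropy_le_log U (card_horizRun ▸ Nat.succ_pos _)

end HorizontalRuns

section Counting

variable {m : ℕ}

lemma mem_avoidsRuns_of_eq_zero_off {x : (ℤ × ℤ) → Fin 2} {L : Finset (ℤ × ℤ)}
    (hx : ∀ q ∉ L, x q = 0) (hwin : ∀ p, Zrect (m + 1) 1 p ⊆ L → ∃ q ∈ Zrect (m + 1) 1 p, x q = 0) :
    x ∈ avoidsRuns (1, 0) m := by
  refine mem_avoidsRuns_one_zero.mpr fun p => ?_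
  by_cases hp : Zrect (m + 1) 1 p ⊆ L
  · exact hwin p hp
  · obtain ⟨q, hqW, hqL⟩ := Finset.not_subset.mp hp
    exact ⟨q, hqW, hx q hqL⟩

lemma two_pow_le_patternCount_Zrect {k : ℕ} (hk : k ≤ m) (c : ℤ × ℤ) :
    2 ^ k ≤ patternCount (avoidsRuns (1, 0) m) (Zrect k 1 c) := by
  set W := Zrect k 1 c
  have hall : (fun x => fun p : W => x (p : ℤ × ℤ)) '' avoidsRuns (1, 0) m = Set.univ := by
    refine Set.eq_univ_of_forall fun f => ⟨fun q => if hq : q ∈ W then f ⟨q, hq⟩ else 0, ?_,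
      funext fun p => dif_pos p.2⟩
    refine mem_avoidsRuns_of_eq_zero_off (L := W) (fun q hq => dif_neg hq) fun p hp => ?_
    have := Finset.card_le_card hp
    simp only [W, card_Zrect_s8] at this
    omega
  unfold patternCount
  rw [hall, Set.ncard_univ, Nat.card_fun]
  simp [W, card_Zrect_s8]

lemma patternCount_Zrect_lt_two_pow (m : ℕ) :
    patternCount (avoidsRuns (1, 0) m) (Zrect (m + 1) 1 (0, 0)) < 2 ^ (m + 1) := by
  set W := Zrect (m + 1) 1 (0, 0)
  have hmissing : (fun x => fun p : W => x (p : ℤ × ℤ)) '' avoidsRuns (1, 0) m ⊂ Set.univ := by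
    refine Set.ssubset_univ_iff.mpr fun hall => ?_
    obtain ⟨x, hx, hx1⟩ := hall.symm ▸ Set.mem_univ (fun _ => 1 : W → Fin 2)
    obtain ⟨q, hqW, hq⟩ := mem_avoidsRuns_one_zero.mp hx (0, 0)
    exact zero_ne_one (hq.symm.trans (congrFun hx1 ⟨q, hqW⟩))
  calc patternCount (avoidsRuns (1, 0) m) W < (Set.univ : Set (W → Fin 2)).ncard :=
        Set.ncard_lt_ncard hmissing
    _ = 2 ^ (m + 1) := by simp [Set.ncard_univ, W, card_Zrect_s8]

lemma rectEntropy_avoidsRuns_lt_log_two (m : ℕ) :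
    rectEntropy (avoidsRuns (1, 0) m) < Real.log 2 := by
  have hpos := patternCount_pos (avoidsRuns_nonempty (1, 0) m) (Zrect (m + 1) 1 (0, 0))
  have hlt : Real.log (patternCount (avoidsRuns (1, 0) m) (Zrect (m + 1) 1 (0, 0))) <
      (m + 1 : ℕ) * Real.log 2 := by
    rw [← Real.log_pow]
    exact Real.log_lt_log (by exact_mod_cast hpos)
      (by exact_mod_cast patternCount_Zrect_lt_two_pow m)
  exact lt_of_mul_lt_mul_left ((mul_rectEntropy_le_log _ (Nat.succ_pos m)).trans_lt hlt)
    (Nat.cast_nonneg _)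

lemma patternCount_horizRun_mul_le {L : Finset (ℤ × ℤ)} {q₀ : ℤ × ℤ} (hq₀ : q₀ ∈ L) :
    patternCount (avoidsRuns (1, 0) m) (horizRun L q₀) *
      patternCount (avoidsRuns (1, 0) m) (L \ horizRun L q₀) ≤
      patternCount (avoidsRuns (1, 0) m) L := by
  set S := horizRun L q₀
  rw [← congrArg (patternCount _) (Finset.union_sdiff_of_subset (horizRun_subset hq₀))]
  refine patternCount_mul_le_union fun y hy z hz => ?_
  refine ⟨fun q => if q ∈ S then y q else if q ∈ L then z q else 0, ?_,
    fun p hp => if_pos hp, fun p hp => ?_⟩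
  · refine mem_avoidsRuns_of_eq_zero_off (L := L)
      (fun q hq => by rw [if_neg fun h => hq (horizRun_subset hq₀ h), if_neg hq]) fun p hp => ?_
    rcases subset_or_disjoint_horizRun hq₀ hp with hpS | hpS
    · obtain ⟨q, hqW, hq⟩ := mem_avoidsRuns_one_zero.mp hy p
      exact ⟨q, hqW, by rw [if_pos (hpS hqW), hq]⟩
    · obtain ⟨q, hqW, hq⟩ := mem_avoidsRuns_one_zero.mp hz p
      exact ⟨q, hqW, by rw [if_neg (Finset.disjoint_left.mp hpS hqW), if_pos (hp hqW), hq]⟩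
  · obtain ⟨hpL, hpS⟩ := Finset.mem_sdiff.mp hp
    simp only [if_neg hpS, if_pos hpL]

lemma mul_log_two_le_log_patternCount_horizRun {L : Finset (ℤ × ℤ)} {q : ℤ × ℤ}
    (hm : (horizRun L q).card = m) :
    m * Real.log 2 ≤ Real.log (patternCount (avoidsRuns (1, 0) m) (horizRun L q)) := by
  rw [horizRun_eq_Zrect, patternCount_Zrect (avoidsRuns_isShiftSpace (1, 0) m).2.2, hm,
    ← Real.log_pow]
  exact Real.log_le_log (by positivity) (by exact_mod_cast two_pow_le_patternCount_Zrect le_rfl _)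

theorem betaHoriz_mul_log_two_add_le (m : ℕ) (L : Finset (ℤ × ℤ)) :
    betaHoriz m L * Real.log 2 + (L.card - betaHoriz m L) * rectEntropy (avoidsRuns (1, 0) m) ≤
      Real.log (patternCount (avoidsRuns (1, 0) m) L) := by
  induction L using Finset.strongInduction with
  | H L ih =>
  rcases L.eq_empty_or_nonempty with rfl | ⟨q₀, hq₀⟩
  · simpa [betaHoriz] using Real.log_natCast_nonneg _
  set S := horizRun L q₀
  have hpos := patternCount_pos (avoidsRuns_nonempty (1, 0) m)
  have hsplit : Real.log (patternCount (avoidsRuns (1, 0) m) S) +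
      Real.log (patternCount (avoidsRuns (1, 0) m) (L \ S)) ≤
      Real.log (patternCount (avoidsRuns (1, 0) m) L) := by
    rw [← Real.log_mul (by exact_mod_cast (hpos _).ne') (by exact_mod_cast (hpos _).ne')]
    exact Real.log_le_log (by exact_mod_cast Nat.mul_pos (hpos _) (hpos _))
      (by exact_mod_cast patternCount_horizRun_mul_le hq₀)
  have hrest := ih (L \ S) (Finset.sdiff_ssubset (horizRun_subset hq₀) ⟨q₀, mem_horizRun_self⟩)
  have hcard : (L.card : ℝ) = (L \ S).card + S.card := by
    exact_mod_cast (Finset.card_sdiff_add_card_eq_card (horizRun_subset hq₀)).symm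
  have hrun := card_mul_rectEntropy_le_log_patternCount_horizRun
    (avoidsRuns_isShiftSpace (1, 0) m).2.2 L q₀
  rw [betaHoriz_eq_sdiff_horizRun m hq₀, hcard]
  split_ifs with hm
  · have := mul_log_two_le_log_patternCount_horizRun hm
    rw [hm]
    push_cast
    linarith
  · push_cast
    linarith

end Counting

lemma lt_limsup_of_add_mul_le {ι : Type*} {l : Filter ι} [l.NeBot] {f g : ι → ℝ} {a b : ℝ}
    (hab : a < b) (hf : IsBoundedUnder (· ≤ ·) l f) (hg₀ : ∀ i, 0 ≤ g i) (hg : 0 < limsup g l)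
    (hfg : ∀ i, 0 < g i → a + (b - a) * g i ≤ f i) : a < limsup f l := by
  have hfreq : ∃ᶠ i in l, limsup g l / 2 < g i :=
    frequently_lt_of_lt_limsup (isCoboundedUnder_le_of_le l hg₀) (by linarith)
  have hle : a + (b - a) * (limsup g l / 2) ≤ limsup f l := by
    refine le_limsup_of_frequently_le (hfreq.mono fun i hi => ?_) hf
    have := mul_le_mul_of_nonneg_left hi.le (sub_nonneg.mpr hab.le)
    linarith [hfg i (by linarith [hg₀ i])]
  linarith [mul_pos (sub_pos.mpr hab) (half_pos hg)]

theorem rectEntropy_lt_entropyAlong_avoidsRuns {m : ℕ} {Ω : ℕ → Finset (ℤ × ℤ)}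
    (hβ : 0 < limsup (fun n => (betaHoriz m (Ω n) : ℝ) / (Ω n).card) atTop) :
    rectEntropy (avoidsRuns (1, 0) m) < entropyAlong (avoidsRuns (1, 0) m) Ω := by
  refine lt_limsup_of_add_mul_le (rectEntropy_avoidsRuns_lt_log_two m)
    (isBoundedUnder_of ⟨Real.log 2, fun n => ?_⟩) (fun n => by positivity) hβ fun n hn => ?_
  · simpa using one_div_card_mul_log_patternCount_le (avoidsRuns_nonempty (1, 0) m) (Ω n)
  have hcard : (Ω n).card ≠ 0 := fun h => by simp [h] at hn
  calc rectEntropy (avoidsRuns (1, 0) m) +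
        (Real.log 2 - rectEntropy (avoidsRuns (1, 0) m)) * (betaHoriz m (Ω n) / (Ω n).card)
      = 1 / ((Ω n).card : ℝ) * (betaHoriz m (Ω n) * Real.log 2 +
          ((Ω n).card - betaHoriz m (Ω n)) * rectEntropy (avoidsRuns (1, 0) m)) := by
        field_simp
        ring
    _ ≤ _ := by gcongr; exact betaHoriz_mul_log_two_add_le m (Ω n)

lemma hasVertLength_iff_swap (L : Finset (ℤ × ℤ)) (p : ℤ × ℤ) (ℓ : ℕ) :
    HasVertLength L p ℓ ↔ HasHorizLength (L.image Prod.swap) p.swap ℓ := by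
  have hwin : ∀ k : ℕ, (∃ c, p ∈ Zrect 1 k c ∧ Zrect 1 k c ⊆ L) ↔
      ∃ c, p.swap ∈ Zrect k 1 c ∧ Zrect k 1 c ⊆ L.image Prod.swap := fun k => by
    refine (Equiv.prodComm ℤ ℤ).exists_congr fun c => ?_
    rw [Equiv.prodComm_apply, ← image_swap_Zrect, Prod.swap_injective.mem_finset_image,
      Finset.image_subset_image_iff Prod.swap_injective]
  simp only [HasVertLength, HasHorizLength, hwin]

lemma betaVert_eq_betaHoriz_swap (m : ℕ) (L : Finset (ℤ × ℤ)) :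
    betaVert m L = betaHoriz m (L.image Prod.swap) := by
  rw [betaVert, betaHoriz, Finset.filter_image,
    Finset.card_image_of_injective _ Prod.swap_injective]
  simp only [hasVertLength_iff_swap]

theorem exists_SFT_entropyAlong_gt_rectEntropy_general
    (Ω : ℕ → Finset (ℤ × ℤ))
    (hlen : ∃ m : ℕ, 1 ≤ m ∧
      (0 < Filter.limsup (fun n => (betaHoriz m (Ω n) : ℝ) / ((Ω n).card : ℝ)) Filter.atTop ∨
        0 < Filter.limsup (fun n => (betaVert m (Ω n) : ℝ) / ((Ω n).card : ℝ)) Filter.atTop)) :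
    ∃ U : Set ((ℤ × ℤ) → Fin 2), IsShiftSpace U ∧ IsSFT U ∧
      rectEntropy U < entropyAlong U Ω := by
  obtain ⟨m, -, hhoriz | hvert⟩ := hlen
  · exact ⟨avoidsRuns (1, 0) m, avoidsRuns_isShiftSpace _ m, avoidsRuns_isSFT _ m,
      rectEntropy_lt_entropyAlong_avoidsRuns hhoriz⟩
  refine ⟨avoidsRuns (0, 1) m, avoidsRuns_isShiftSpace _ m, avoidsRuns_isSFT _ m, ?_⟩
  rw [← Prod.swap_prod_mk, ← image_comp_swap_avoidsRuns, rectEntropy_comp_swap,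
    entropyAlong_comp_swap]
  refine rectEntropy_lt_entropyAlong_avoidsRuns ?_
  simpa only [betaVert_eq_betaHoriz_swap,
    Finset.card_image_of_injective _ Prod.swap_injective] using hvert

/-- Theorem 1.3 / 4.1: if a positive proportion of points of `Ω(n)` have
horizontal (or vertical) length `m`, then some additive SFT `U ⊂ {0,1}^{ℤ²}` satisfies
`h_Ω(U) > h_r(U)`. -/
theorem exists_SFT_entropyAlong_gt_rectEntropy
    (Ω : ℕ → Finset (ℤ × ℤ)) (hΩ : IsExpandingSystem Ω)
    (hlen : ∃ m : ℕ, 1 ≤ m ∧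
      (0 < Filter.limsup (fun n => (betaHoriz m (Ω n) : ℝ) / ((Ω n).card : ℝ)) Filter.atTop ∨
        0 < Filter.limsup (fun n => (betaVert m (Ω n) : ℝ) / ((Ω n).card : ℝ)) Filter.atTop)) :
    ∃ U : Set ((ℤ × ℤ) → Fin 2), IsShiftSpace U ∧ IsSFT U ∧
      rectEntropy U < entropyAlong U Ω :=
  exists_SFT_entropyAlong_gt_rectEntropy_general Ω hlen
end

section
/- For the horizontal golden-mean shift U_B and every nonempty finite set L ⊂ ℤ², Γ(L, U_B) ≥ g^{|L|}, equivalently (1/|L|) log Γ(L, U_B) ≥ log g, where g = (1+√5)/2. -/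
/-!
Every subset `S ⊆ L` with no two horizontally adjacent points gives a pattern of the
golden-mean shift on `L` (its indicator, extended by `0` off `L`). Let `I(L)` count these
subsets and let `p` be a point of `L` whose right neighbour is not in `L`. Such an `S` either
omits `p`, or contains `p` and then omits its left neighbour `q`, so
`I(L) ≥ I(L \ {p}) + I(L \ {p, q})`. Since `φ ^ m = φ ^ (m - 1) + φ ^ (m - 2)`, induction on
`|L|` gives `I(L) ≥ φ ^ |L|`.
-/

open Filter
open scoped Classical

open Finset Real goldenRatio

def horizIndepSets (L : Finset (ℤ × ℤ)) : Finset (Finset (ℤ × ℤ)) :=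
  L.powerset.filter fun S => ∀ p ∈ S, (p.1 + 1, p.2) ∉ S

@[simp]
theorem mem_horizIndepSets {L S : Finset (ℤ × ℤ)} :
    S ∈ horizIndepSets L ↔ S ⊆ L ∧ ∀ p ∈ S, (p.1 + 1, p.2) ∉ S := by
  simp [horizIndepSets]

theorem horizIndepSets_mono {L L' : Finset (ℤ × ℤ)} (h : L' ⊆ L) :
    horizIndepSets L' ⊆ horizIndepSets L := fun _ hS => by
  rw [mem_horizIndepSets] at *
  exact ⟨hS.1.trans h, hS.2⟩

theorem card_horizIndepSets_le_patternCount (L : Finset (ℤ × ℤ)) :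
    #(horizIndepSets L) ≤ patternCount goldenMeanShift L := by
  let indicator : Finset (ℤ × ℤ) → (ℤ × ℤ) → Fin 2 := fun S p => if p ∈ S then 1 else 0
  have hinj : Set.InjOn (fun S (p : L) => indicator S p) (horizIndepSets L) := by
    intro S hS T hT h
    ext p
    by_cases hpL : p ∈ L
    · have := congrFun h ⟨p, hpL⟩
      simp only [indicator] at this
      split_ifs at this <;> simp_all
    · exact iff_of_false (fun hp => hpL ((mem_horizIndepSets.1 hS).1 hp))
        (fun hp => hpL ((mem_horizIndepSets.1 hT).1 hp))
  have hmaps : Set.MapsTo (fun S (p : L) => indicator S p) (horizIndepSets L)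
      ((fun x (p : L) => x p) '' goldenMeanShift) := by
    intro S hS
    refine ⟨indicator S, fun p => ?_, rfl⟩
    by_cases hpS : p ∈ S
    · simp [indicator, hpS, (mem_horizIndepSets.1 hS).2 p hpS]
    · simp [indicator, hpS]
  rw [patternCount, ← Set.ncard_coe_finset]
  exact Set.ncard_le_ncard_of_injOn _ hmaps hinj (Set.toFinite _)

theorem exists_mem_right_notMem {L : Finset (ℤ × ℤ)} (hL : L.Nonempty) :
    ∃ p ∈ L, (p.1 + 1, p.2) ∉ L := by
  obtain ⟨p, hp, hmax⟩ := L.exists_max_image Prod.fst hL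
  exact ⟨p, hp, fun h => by linarith [hmax _ h]⟩

theorem insert_mem_horizIndepSets {L S : Finset (ℤ × ℤ)} {p : ℤ × ℤ}
    (hp : p ∈ L) (hr : (p.1 + 1, p.2) ∉ L)
    (hS : S ∈ horizIndepSets ((L.erase p).erase (p.1 - 1, p.2))) :
    insert p S ∈ horizIndepSets L := by
  obtain ⟨hSL, hSindep⟩ := mem_horizIndepSets.1 hS
  refine mem_horizIndepSets.2
    ⟨insert_subset hp (hSL.trans ((erase_subset _ _).trans (erase_subset _ _))), ?_⟩
  simp only [mem_insert]
  rintro r (rfl | hrS) (h | h)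
  · simp [Prod.ext_iff] at h
  · exact hr (mem_of_mem_erase (mem_of_mem_erase (hSL h)))
  · have hq : r = (p.1 - 1, p.2) := by
      subst h; ext <;> simp
    simpa [hq] using hSL hrS
  · exact hSindep r hrS h

theorem card_horizIndepSets_erase_add_card_le {L : Finset (ℤ × ℤ)} {p : ℤ × ℤ}
    (hp : p ∈ L) (hr : (p.1 + 1, p.2) ∉ L) :
    #(horizIndepSets (L.erase p)) + #(horizIndepSets ((L.erase p).erase (p.1 - 1, p.2)))
      ≤ #(horizIndepSets L) := by
  set I₂ := horizIndepSets ((L.erase p).erase (p.1 - 1, p.2))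
  have hp₂ : ∀ S ∈ I₂, p ∉ S := fun S hS h => by
    simpa using (mem_horizIndepSets.1 hS).1 h
  have hinj : Set.InjOn (insert p) (I₂ : Set (Finset (ℤ × ℤ))) := fun S hS T hT h => by
    rw [← erase_insert (hp₂ S hS), h, erase_insert (hp₂ T hT)]
  have hdisj : Disjoint (horizIndepSets (L.erase p)) (I₂.image (insert p)) := by
    simp only [disjoint_right, mem_image]
    rintro _ ⟨S, -, rfl⟩ h
    simpa using (mem_horizIndepSets.1 h).1 (mem_insert_self p S)
  rw [← card_image_of_injOn hinj, ← card_union_of_disjoint hdisj]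
  exact card_le_card (union_subset (horizIndepSets_mono (erase_subset p L))
    (image_subset_iff.2 fun S hS => insert_mem_horizIndepSets hp hr hS))

theorem goldenRatio_zpow_eq_add (m : ℤ) : φ ^ m = φ ^ (m - 1) + φ ^ (m - 2) := by
  rw [show m = (m - 2) + 2 by ring, zpow_add₀ goldenRatio_ne_zero, zpow_ofNat, goldenRatio_sq]
  rw [show m - 2 + 2 - 1 = (m - 2) + 1 by ring, zpow_add_one₀ goldenRatio_ne_zero]
  ring_nf

theorem goldenRatio_pow_card_le_card_horizIndepSets (L : Finset (ℤ × ℤ)) :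
    φ ^ #L ≤ #(horizIndepSets L) := by
  induction L using Finset.strongInduction with
  | H L ih =>
    obtain rfl | hL := L.eq_empty_or_nonempty
    · simp [horizIndepSets, filter_singleton]
    obtain ⟨p, hp, hr⟩ := exists_mem_right_notMem hL
    set L₁ := L.erase p
    set L₂ := L₁.erase (p.1 - 1, p.2)
    have hL₁ : L₁ ⊂ L := erase_ssubset hp
    have hL₂ : L₂ ⊂ L := (erase_subset _ _).trans_ssubset hL₁
    have hcard₁ : (#L₁ : ℤ) = #L - 1 := by simp [L₁, card_erase_of_mem hp, hL.card_pos]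
    have hcard₂ : (#L : ℤ) - 2 ≤ #L₂ := by
      have : #L₁ - 1 ≤ #L₂ := pred_card_le_card_erase
      omega
    calc φ ^ #L = φ ^ ((#L : ℤ) - 1) + φ ^ ((#L : ℤ) - 2) := by
          rw [← goldenRatio_zpow_eq_add, zpow_natCast]
      _ ≤ φ ^ #L₁ + φ ^ #L₂ := by
          rw [← zpow_natCast, ← zpow_natCast, hcard₁]
          gcongr
          exact one_lt_goldenRatio.le
      _ ≤ #(horizIndepSets L₁) + #(horizIndepSets L₂) := add_le_add (ih _ hL₁) (ih _ hL₂)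
      _ ≤ #(horizIndepSets L) := by exact_mod_cast card_horizIndepSets_erase_add_card_le hp hr

theorem log_le_one_div_mul_log_of_pow_le {a b : ℝ} {n : ℕ} (ha : 0 < a) (hn : 0 < n)
    (h : a ^ n ≤ b) : log a ≤ 1 / n * log b := by
  rw [one_div, inv_mul_eq_div, le_div_iff₀ (by positivity), mul_comm, ← log_pow]
  exact log_le_log (pow_pos ha n) h

/-- for every nonempty finite `L ⊂ ℤ²`, `Γ(L, U_B) ≥ g^{|L|}`,
equivalently `(1/|L|) log Γ(L, U_B) ≥ log g`. -/
theorem goldenMeanShift_patternCount_ge_goldenRatio_pow :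
    ∀ L : Finset (ℤ × ℤ), L.Nonempty →
      ((1 + Real.sqrt 5) / 2) ^ L.card ≤ (patternCount goldenMeanShift L : ℝ) ∧
      Real.log ((1 + Real.sqrt 5) / 2) ≤
        (1 / (L.card : ℝ)) * Real.log (patternCount goldenMeanShift L) := by
  intro L hL
  have hpow : φ ^ #L ≤ patternCount goldenMeanShift L :=
    (goldenRatio_pow_card_le_card_horizIndepSets L).trans
      (by exact_mod_cast card_horizIndepSets_le_patternCount L)
  exact ⟨hpow, log_le_one_div_mul_log_of_pow_le goldenRatio_pos hL.card_pos hpow⟩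
end
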